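/- arXiv:2309.09313 — 2 statements merged into one kernel-verified Lean document; each statement's English description precedes it below -/
import Mathlib

section
/- Gupta's Restriction Theorem: Let T = (V,E) be a finite tree with weight function W: E → (0,∞) and geodesic metric d_T, and let V' ⊂ V. Then there exist a set E' of two-element subsets of V' and a weight function W': E' → (0,∞) such that T' = (V',E') is a tree and its geodesic metric d_{T'} satisfies (1/4)·d_T(x,y) ≤ d_{T'}(x,y) ≤ 2·d_T(x,y) for all x, y ∈ V'. -/
open scoped BigOperators Classical

/-- `μ` admits the molecular representation `μ = ∑ j, r j • (δ_{x j} - δ_{y j})`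
with positive coefficients and distinct endpoints. -/
def IsMolRep {M : Type*} (μ : M → ℝ) {n : ℕ} (r : Fin n → ℝ) (x y : Fin n → M) : Prop :=
  (∀ j, 0 < r j) ∧ (∀ j, x j ≠ y j) ∧
    ∀ m, μ m = ∑ j, r j * ((if x j = m then (1 : ℝ) else 0) - (if y j = m then (1 : ℝ) else 0))

/-- The transportation cost of a molecular representation. -/
def molCost {M : Type*} (d : M → M → ℝ) {n : ℕ} (r : Fin n → ℝ) (x y : Fin n → M) : ℝ :=
  ∑ j, r j * d (x j) (y j)

/-- The transportation cost norm: infimum of the costs of all molecular representations. -/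
noncomputable def tcNorm {M : Type*} (d : M → M → ℝ) (μ : M → ℝ) : ℝ :=
  sInf { c | ∃ (n : ℕ) (r : Fin n → ℝ) (x y : Fin n → M), IsMolRep μ r x y ∧ c = molCost d r x y }

/-- `d` is the geodesic metric on the connected graph `G` generated by the weight function `w`:
`d u v` is the minimum of the `w`-lengths of paths from `u` to `v`. -/
def IsGeodesicOf {V : Type*} (G : SimpleGraph V) (w : Sym2 V → ℝ) (d : V → V → ℝ) : Prop :=
  ∀ u v : V, IsLeast { c | ∃ p : G.Walk u v, p.IsPath ∧ c = (p.edges.map w).sum } (d u v)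

namespace GuptaAux

open SimpleGraph Walk

/-! ### List auxiliary lemmas -/

private lemma list_toFinset_sum_le {α : Type*} [DecidableEq α] (g : α → ℝ) :
    ∀ (l : List α), (∀ e ∈ l, 0 ≤ g e) → l.toFinset.sum g ≤ (l.map g).sum := by
  intro l
  induction l with
  | nil => simp
  | cons a t ih =>
    intro h
    simp only [List.toFinset_cons, List.map_cons, List.sum_cons]
    have ht := ih (fun e he => h e (List.mem_cons_of_mem _ he))
    by_cases ha : a ∈ t.toFinset
    · rw [Finset.insert_eq_self.2 ha]
      have := h a List.mem_cons_self
      linarith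
    · rw [Finset.sum_insert ha]
      linarith

private lemma list_sum_le_of_subset {α : Type*} {l₁ l₂ : List α} (g : α → ℝ)
    (hsub : l₁ ⊆ l₂) (hnd : l₁.Nodup) (hnn : ∀ e ∈ l₂, 0 ≤ g e) :
    (l₁.map g).sum ≤ (l₂.map g).sum := by
  classical
  rw [← List.sum_toFinset g hnd]
  calc l₁.toFinset.sum g ≤ l₂.toFinset.sum g := by
        apply Finset.sum_le_sum_of_subset_of_nonneg
        · intro x hx
          rw [List.mem_toFinset] at hx ⊢
          exact hsub hx
        · intro i hi _
          exact hnn i (List.mem_toFinset.mp hi)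
    _ ≤ (l₂.map g).sum := list_toFinset_sum_le g l₂ hnn

/-! ### Walk costs -/

variable {V : Type*} {G : SimpleGraph V}

/-- The weight of a walk. -/
noncomputable def wcost (W : Sym2 V → ℝ) {a b : V} (p : G.Walk a b) : ℝ :=
  (p.edges.map W).sum

@[simp] lemma wcost_nil (W : Sym2 V → ℝ) {a : V} : wcost W (Walk.nil : G.Walk a a) = 0 := rfl

lemma wcost_cons (W : Sym2 V → ℝ) {a b c : V} (h : G.Adj a b) (p : G.Walk b c) :
    wcost W (Walk.cons h p) = W s(a, b) + wcost W p := by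
  simp [wcost]

lemma wcost_append (W : Sym2 V → ℝ) {a b c : V} (p : G.Walk a b) (q : G.Walk b c) :
    wcost W (p.append q) = wcost W p + wcost W q := by
  simp [wcost, Walk.edges_append]

lemma wcost_reverse (W : Sym2 V → ℝ) {a b : V} (p : G.Walk a b) :
    wcost W p.reverse = wcost W p := by
  simp [wcost, Walk.edges_reverse, List.map_reverse, List.sum_reverse]

lemma wcost_copy (W : Sym2 V → ℝ) {a b a' b' : V} (p : G.Walk a b) (ha : a = a') (hb : b = b') :
    wcost W (p.copy ha hb) = wcost W p := by
  subst ha; subst hb; rfl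

lemma wcost_concat (W : Sym2 V → ℝ) {a b c : V} (p : G.Walk a b) (h : G.Adj b c) :
    wcost W (p.concat h) = wcost W p + W s(b, c) := by
  simp [wcost, Walk.edges_concat]

lemma wcost_nonneg {W : Sym2 V → ℝ} (hW : ∀ e ∈ G.edgeSet, 0 < W e) {a b : V} (p : G.Walk a b) :
    0 ≤ wcost W p := by
  apply List.sum_nonneg
  intro x hx
  rw [List.mem_map] at hx
  obtain ⟨e, he, rfl⟩ := hx
  exact le_of_lt (hW e (p.edges_subset_edgeSet he))

/-! ### The unique path in a tree -/

/-- The unique path between two vertices of a tree. -/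
noncomputable def thePath (hG : G.IsTree) (a b : V) : G.Walk a b :=
  (hG.existsUnique_path a b).choose

lemma thePath_isPath (hG : G.IsTree) (a b : V) : (thePath hG a b).IsPath :=
  (hG.existsUnique_path a b).choose_spec.1

lemma path_eq (hG : G.IsTree) {a b : V} {p : G.Walk a b} (hp : p.IsPath) :
    p = thePath hG a b :=
  (hG.existsUnique_path a b).choose_spec.2 p hp

lemma thePath_self (hG : G.IsTree) (a : V) : thePath hG a a = Walk.nil :=
  (path_eq hG Walk.IsPath.nil).symm

lemma thePath_reverse (hG : G.IsTree) (a b : V) :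
    (thePath hG a b).reverse = thePath hG b a :=
  path_eq hG ((thePath_isPath hG a b).reverse)

lemma mem_rev (hG : G.IsTree) {a b w : V} (h : w ∈ (thePath hG a b).support) :
    w ∈ (thePath hG b a).support := by
  rw [← thePath_reverse hG a b, Walk.support_reverse, List.mem_reverse]
  exact h

/-- In a tree, the function assigning to each pair the weight of the unique path between them
is a geodesic metric. -/
lemma tree_geodesic (hG : G.IsTree) (W : Sym2 V → ℝ) :
    IsGeodesicOf G W (fun u v => wcost W (thePath hG u v)) := by
  intro u v
  constructor
  · exact ⟨thePath hG u v, thePath_isPath hG u v, rfl⟩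
  · rintro c ⟨p, hp, rfl⟩
    rw [path_eq hG hp]
    exact le_of_eq rfl

end GuptaAux

section GuptaSetup

open SimpleGraph Walk GuptaAux

/-- All of the data of Gupta's construction. -/
structure GSetup (V : Type*) [Fintype V] where
  G : SimpleGraph V
  hG : G.IsTree
  W : Sym2 V → ℝ
  hW : ∀ e ∈ G.edgeSet, 0 < W e
  V' : Set V
  r : V
  hr : r ∈ V'

namespace GSetup

variable {V : Type*} [Fintype V] (S : GSetup V)

/-- The geodesic tree metric. -/
noncomputable def dm (u v : V) : ℝ := wcost S.W (thePath S.hG u v)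

lemma path_cost {a b : V} {p : S.G.Walk a b} (hp : p.IsPath) : wcost S.W p = S.dm a b := by
  rw [dm, path_eq S.hG hp]

@[simp] lemma dm_self (a : V) : S.dm a a = 0 := by
  rw [dm, thePath_self]; rfl

lemma dm_symm (a b : V) : S.dm a b = S.dm b a := by
  rw [dm, dm, ← thePath_reverse S.hG a b, wcost_reverse]

lemma dm_nonneg (a b : V) : 0 ≤ S.dm a b := wcost_nonneg S.hW _

lemma dm_le_wcost {a b : V} (p : S.G.Walk a b) : S.dm a b ≤ wcost S.W p := by
  have h1 : wcost S.W p.bypass = S.dm a b := path_cost S (p.bypass_isPath)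
  rw [← h1]
  exact list_sum_le_of_subset S.W (Walk.edges_bypass_subset p)
    (p.bypass_isPath.edges_nodup)
    (fun e he => le_of_lt (S.hW e (p.edges_subset_edgeSet he)))

lemma dm_triangle (a b c : V) : S.dm a c ≤ S.dm a b + S.dm b c := by
  have := S.dm_le_wcost ((thePath S.hG a b).append (thePath S.hG b c))
  rwa [wcost_append, path_cost S (thePath_isPath S.hG a b),
    path_cost S (thePath_isPath S.hG b c)] at this

lemma dm_adj {a b : V} (h : S.G.Adj a b) : S.dm a b = S.W s(a, b) := by
  have hp : (Walk.cons h Walk.nil : S.G.Walk a b).IsPath := (Path.singleton h).property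
  have := S.path_cost hp
  rw [wcost_cons, wcost_nil] at this
  linarith

lemma dm_pos {a b : V} (hab : a ≠ b) : 0 < S.dm a b := by
  have hnn : ¬(thePath S.hG a b).Nil := Walk.not_nil_of_ne hab
  obtain ⟨u, h, q, hq⟩ := Walk.not_nil_iff.mp hnn
  have : S.dm a b = S.W s(a, u) + wcost S.W q := by
    rw [dm, hq, wcost_cons]
  rw [this]
  have h1 : 0 < S.W s(a, u) := S.hW _ h
  have h2 : 0 ≤ wcost S.W q := wcost_nonneg S.hW q
  linarith

lemma dm_eq_zero {a b : V} (h : S.dm a b = 0) : a = b := by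
  by_contra hab
  exact absurd h (ne_of_gt (S.dm_pos hab))

lemma takeUntil_eq {a b w : V} (h : w ∈ (thePath S.hG a b).support) :
    (thePath S.hG a b).takeUntil w h = thePath S.hG a w :=
  path_eq S.hG ((thePath_isPath S.hG a b).takeUntil h)

lemma dropUntil_eq {a b w : V} (h : w ∈ (thePath S.hG a b).support) :
    (thePath S.hG a b).dropUntil w h = thePath S.hG w b :=
  path_eq S.hG ((thePath_isPath S.hG a b).dropUntil h)

lemma app_eq {a b w : V} (h : w ∈ (thePath S.hG a b).support) :
    thePath S.hG a b = (thePath S.hG a w).append (thePath S.hG w b) := by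
  conv_lhs => rw [← Walk.take_spec _ h]
  rw [S.takeUntil_eq h, S.dropUntil_eq h]

lemma dadd {a b w : V} (h : w ∈ (thePath S.hG a b).support) :
    S.dm a w + S.dm w b = S.dm a b := by
  conv_rhs => rw [dm, S.app_eq h, wcost_append,
    path_cost S (thePath_isPath S.hG a w), path_cost S (thePath_isPath S.hG w b)]

lemma supp_trans {b c z : V} (h : z ∈ (thePath S.hG b c).support) :
    (thePath S.hG z c).support ⊆ (thePath S.hG b c).support := by
  rw [← S.dropUntil_eq h]
  exact Walk.support_dropUntil_subset _ h

lemma dec {a b : V} (hab : a ≠ b) :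
    ∃ h : S.G.Adj a ((thePath S.hG a b).getVert 1),
      thePath S.hG a b = Walk.cons h (thePath S.hG ((thePath S.hG a b).getVert 1) b) := by
  have hnn : ¬(thePath S.hG a b).Nil := Walk.not_nil_of_ne hab
  obtain ⟨u, h, q, hq⟩ := Walk.not_nil_iff.mp hnn
  have hu : (thePath S.hG a b).getVert 1 = u := by
    rw [hq, Walk.getVert_cons_succ, Walk.getVert_zero]
  rw [hu]
  have hqp : q.IsPath := by
    have := thePath_isPath S.hG a b
    rw [hq, Walk.cons_isPath_iff] at this
    exact this.1
  exact ⟨h, by rw [hq, path_eq S.hG hqp]⟩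

lemma dec' {a b : V} (hab : a ≠ b) :
    ∃ (z : V) (h : S.G.Adj a z), z = (thePath S.hG a b).getVert 1 ∧
      thePath S.hG a b = Walk.cons h (thePath S.hG z b) := by
  obtain ⟨h, hdec⟩ := S.dec hab
  exact ⟨_, h, rfl, hdec⟩

/-! ### The rooted tree structure -/

/-- Depth of a vertex: the length of its path to the root. -/
noncomputable def dep (v : V) : ℕ := (thePath S.hG v S.r).length

/-- The parent of a vertex in the tree rooted at `S.r`. -/
noncomputable def parentT (v : V) : V := (thePath S.hG v S.r).getVert 1

lemma dep_eq_zero_iff {v : V} : S.dep v = 0 ↔ v = S.r := by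
  constructor
  · intro h
    by_contra hv
    have h2 : 0 < (thePath S.hG v S.r).length :=
      Walk.not_nil_iff_lt_length.mp (Walk.not_nil_of_ne hv)
    rw [dep] at h
    omega
  · intro h; subst h; rw [dep, thePath_self]; rfl

@[simp] lemma parentT_r : S.parentT S.r = S.r := by
  rw [parentT, thePath_self]; rfl

lemma parentT_decomp {v : V} (hv : v ≠ S.r) :
    ∃ h : S.G.Adj v (S.parentT v),
      thePath S.hG v S.r = Walk.cons h (thePath S.hG (S.parentT v) S.r) := by
  exact S.dec hv

lemma dep_parentT {v : V} (hv : v ≠ S.r) : S.dep (S.parentT v) + 1 = S.dep v := by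
  obtain ⟨h, hdec⟩ := S.parentT_decomp hv
  rw [dep, dep, hdec, Walk.length_cons]

lemma parentT_adj {v : V} (hv : v ≠ S.r) : S.G.Adj v (S.parentT v) :=
  (S.parentT_decomp hv).choose

lemma parentT_ne {v : V} (hv : v ≠ S.r) : S.parentT v ≠ v :=
  fun h => (S.parentT_adj hv).ne' (by rw [h])

lemma parentT_mem {v : V} (hv : v ≠ S.r) : S.parentT v ∈ (thePath S.hG v S.r).support := by
  obtain ⟨h, hdec⟩ := S.parentT_decomp hv
  rw [hdec, Walk.support_cons]
  exact List.mem_cons_of_mem _ (Walk.start_mem_support _)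

lemma supp_parentT_sub {v : V} (hv : v ≠ S.r) :
    (thePath S.hG (S.parentT v) S.r).support ⊆ (thePath S.hG v S.r).support := by
  obtain ⟨h, hdec⟩ := S.parentT_decomp hv
  rw [hdec, Walk.support_cons]
  exact fun x hx => List.mem_cons_of_mem _ hx

lemma dm_parentT_add {v : V} (hv : v ≠ S.r) :
    S.dm v S.r = S.dm v (S.parentT v) + S.dm (S.parentT v) S.r := by
  obtain ⟨h, hdec⟩ := S.parentT_decomp hv
  have : S.dm v S.r = S.W s(v, S.parentT v) + S.dm (S.parentT v) S.r := by
    rw [dm, hdec, wcost_cons, path_cost S (thePath_isPath _ _ _)]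
  rw [this, S.dm_adj h]

/-- Edge orientation: every edge of the tree is a parent edge in one of the two directions. -/
lemma eo {a b : V} (h : S.G.Adj a b) : S.parentT a = b ∨ S.parentT b = a := by
  by_cases hb : b ∈ (thePath S.hG a S.r).support
  · left
    have h1 : (Walk.cons h Walk.nil : S.G.Walk a b) = thePath S.hG a b :=
      path_eq S.hG (Path.singleton h).property
    have h2 : thePath S.hG a S.r =
        (thePath S.hG a b).append (thePath S.hG b S.r) := S.app_eq hb
    rw [← h1, Walk.cons_append, Walk.nil_append] at h2
    rw [parentT, h2, Walk.getVert_cons_succ, Walk.getVert_zero]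
  · right
    have hp : (Walk.cons h.symm (thePath S.hG a S.r) : S.G.Walk b S.r).IsPath := by
      rw [Walk.cons_isPath_iff]
      exact ⟨thePath_isPath _ _ _, hb⟩
    have h2 := path_eq S.hG hp
    rw [parentT, ← h2, Walk.getVert_cons_succ, Walk.getVert_zero]

/-- Master lemma: the path from `a` to `b` either starts by going to the parent of `a`,
or `a` is an ancestor of `b`. -/
lemma length_pos_of_ne {a b : V} (hab : a ≠ b) : 0 < (thePath S.hG a b).length :=
  Walk.not_nil_iff_lt_length.mp (Walk.not_nil_of_ne hab)

lemma getVert_one_mem {a b : V} (hab : a ≠ b) :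
    (thePath S.hG a b).getVert 1 ∈ (thePath S.hG a b).support := by
  rw [Walk.mem_support_iff_exists_getVert]
  exact ⟨1, rfl, S.length_pos_of_ne hab⟩

lemma master : ∀ (n : ℕ) {a b : V}, (thePath S.hG a b).length = n → a ≠ b →
    (thePath S.hG a b).getVert 1 = S.parentT a ∨ a ∈ (thePath S.hG b S.r).support := by
  intro n
  induction n using Nat.strong_induction_on with
  | _ n ih =>
    intro a b hlen hab
    obtain ⟨z, h, hz, hdec⟩ := S.dec' hab
    rw [← hz]
    rcases S.eo h with h1 | h1
    · exact Or.inl h1.symm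
    by_cases hzb : z = b
    · right
      rw [hzb] at h1
      have hbr : b ≠ S.r := by
        intro hbr
        rw [hbr, S.parentT_r] at h1
        exact hab (h1.symm.trans hbr.symm)
      rw [← h1]
      exact S.parentT_mem hbr
    · have hlz : (thePath S.hG z b).length < n := by
        rw [← hlen, hdec, Walk.length_cons]
        omega
      rcases ih _ hlz rfl hzb with h2 | h2
      · exfalso
        have hmem := S.getVert_one_mem hzb
        rw [h2, h1] at hmem
        have hP := thePath_isPath S.hG a b
        rw [hdec, Walk.cons_isPath_iff] at hP
        exact hP.2 hmem
      · by_cases hzr : z = S.r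
        · rw [hzr, S.parentT_r] at h1
          right
          rw [← h1]
          exact Walk.end_mem_support _
        · have ha := S.parentT_mem hzr
          rw [h1] at ha
          exact Or.inr (S.supp_trans h2 ha)

lemma master' {a b : V} (hab : a ≠ b) :
    (thePath S.hG a b).getVert 1 = S.parentT a ∨ a ∈ (thePath S.hG b S.r).support :=
  S.master _ rfl hab

/-- Metric betweenness implies membership of the path to the root. -/
lemma dmem : ∀ (n : ℕ) {a v : V}, S.dep a = n →
    S.dm a v + S.dm v S.r = S.dm a S.r → v ∈ (thePath S.hG a S.r).support := by
  intro n
  induction n using Nat.strong_induction_on with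
  | _ n ih =>
    intro a v hdep hsum
    by_cases hva : v = a
    · subst hva; exact Walk.start_mem_support _
    by_cases har : a = S.r
    · subst har
      exfalso
      rw [S.dm_self] at hsum
      have h1 := S.dm_nonneg S.r v
      have h2 := S.dm_nonneg v S.r
      have h3 : S.dm S.r v = 0 := by linarith
      exact hva (S.dm_eq_zero h3).symm
    rcases S.master' (fun h => hva h.symm) with h1 | h1
    · obtain ⟨z, h, hz, hdec⟩ := S.dec' (fun h => hva h.symm : a ≠ v)
      have hcost : S.dm a v = S.W s(a, z) + S.dm z v := by
        rw [dm, hdec, wcost_cons, path_cost S (thePath_isPath _ _ _)]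
      rw [hz.trans h1] at hcost
      have hroot := S.dm_parentT_add har
      rw [S.dm_adj (S.parentT_adj har)] at hroot
      have hsum' : S.dm (S.parentT a) v + S.dm v S.r = S.dm (S.parentT a) S.r := by
        rw [hcost] at hsum; rw [hroot] at hsum; linarith
      have hdp : S.dep (S.parentT a) < n := by
        have := S.dep_parentT har
        omega
      have := ih _ hdp rfl hsum'
      exact S.supp_parentT_sub har this
    · exfalso
      have h2 := S.dadd h1
      have hsym := S.dm_symm a v
      have hva' : S.dm v a = 0 := by linarith
      exact hva (S.dm_eq_zero hva')

/-- Existence of a least common ancestor on the path between two vertices. -/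
lemma lca : ∀ (n : ℕ) {x : V} (y : V), S.dep x = n →
    ∃ c : V, c ∈ (thePath S.hG x S.r).support ∧ c ∈ (thePath S.hG y S.r).support ∧
      S.dm x c + S.dm c y = S.dm x y := by
  intro n
  induction n using Nat.strong_induction_on with
  | _ n ih =>
    intro x y hdep
    by_cases hx : x ∈ (thePath S.hG y S.r).support
    · exact ⟨x, Walk.start_mem_support _, hx, by rw [S.dm_self]; ring⟩
    have hxr : x ≠ S.r := fun h => hx (h ▸ Walk.end_mem_support _)
    have hxy : x ≠ y := fun h => hx (h ▸ Walk.start_mem_support _)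
    rcases S.master' hxy with h1 | h1
    · obtain ⟨z, h, hz, hdec⟩ := S.dec' hxy
      have hcost0 : S.dm x y = S.W s(x, z) + S.dm z y := by
        rw [dm, hdec, wcost_cons, path_cost S (thePath_isPath _ _ _)]
      rw [hz.trans h1] at hcost0
      have hcost : S.dm x y = S.dm x (S.parentT x) + S.dm (S.parentT x) y := by
        rw [S.dm_adj (S.parentT_adj hxr)]
        exact hcost0
      have hdp : S.dep (S.parentT x) < n := by have := S.dep_parentT hxr; omega
      obtain ⟨c, hc1, hc2, hc3⟩ := ih _ hdp y rfl
      refine ⟨c, S.supp_parentT_sub hxr hc1, hc2, ?_⟩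
      have hxc : S.dm x c = S.dm x (S.parentT x) + S.dm (S.parentT x) c := by
        have hle : S.dm x c ≤ S.dm x (S.parentT x) + S.dm (S.parentT x) c :=
          S.dm_triangle _ _ _
        have hge : S.dm x (S.parentT x) + S.dm (S.parentT x) c ≤ S.dm x c := by
          have t1 : S.dm x c + S.dm c S.r ≥ S.dm x S.r := by
            have := S.dm_triangle x c S.r; linarith
          have t2 := S.dm_parentT_add hxr
          have t3 := S.dadd hc1
          linarith
        linarith
      rw [hxc, hcost]
      linarith
    · exact absurd h1 hx

lemma length_symm (a b : V) : (thePath S.hG a b).length = (thePath S.hG b a).length := by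
  rw [← thePath_reverse S.hG b a, Walk.length_reverse]

/-! ### Ancestor lemmas -/

lemma anc1 {t v w : V} (hanc : v ∈ (thePath S.hG t S.r).support)
    (hw : w ∈ (thePath S.hG v t).support) : w ∈ (thePath S.hG t S.r).support := by
  have hw' : w ∈ (thePath S.hG t v).support := mem_rev S.hG hw
  rw [S.app_eq hanc, Walk.mem_support_append_iff]
  exact Or.inl hw'

lemma anc2 {t v w : V} (hanc : v ∈ (thePath S.hG t S.r).support)
    (hw : w ∈ (thePath S.hG v t).support) : v ∈ (thePath S.hG w S.r).support := by
  have h1 := S.dadd hw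
  have h2 := S.dadd hanc
  have h3 := S.dadd (S.anc1 hanc hw)
  apply S.dmem _ rfl
  have e1 := S.dm_symm v w
  have e2 := S.dm_symm t v
  have e3 := S.dm_symm t w
  have e4 := S.dm_symm w t
  linarith

lemma anc3 {t v w : V} (hanc : v ∈ (thePath S.hG t S.r).support)
    (hw : w ∈ (thePath S.hG v t).support) (hwv : w ≠ v) :
    S.parentT w ∈ (thePath S.hG v t).support ∧
      (thePath S.hG v (S.parentT w)).length + 1 = (thePath S.hG v w).length ∧ w ≠ S.r := by
  have hwr : w ≠ S.r := by
    intro hwr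
    have h2 := S.anc2 hanc hw
    rw [hwr, thePath_self] at h2
    simp only [Walk.support_nil, List.mem_singleton] at h2
    exact hwv (hwr.trans h2.symm)
  have hvw : v ∈ (thePath S.hG w S.r).support := S.anc2 hanc hw
  have happ : thePath S.hG w S.r = (thePath S.hG w v).append (thePath S.hG v S.r) :=
    S.app_eq hvw
  obtain ⟨z, h, hz, hdec⟩ := S.dec' hwv
  have hpw : S.parentT w = z := by
    rw [parentT, happ, hdec, Walk.cons_append, Walk.getVert_cons_succ, Walk.getVert_zero]
  have hzmem : z ∈ (thePath S.hG w v).support := by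
    rw [hz]; exact S.getVert_one_mem hwv
  have hzmem' : z ∈ (thePath S.hG v w).support := mem_rev S.hG hzmem
  have hsub : (thePath S.hG v w).support ⊆ (thePath S.hG v t).support := by
    rw [S.app_eq hw]
    intro x hx
    rw [Walk.mem_support_append_iff]
    exact Or.inl hx
  refine ⟨hpw ▸ hsub hzmem', ?_, hwr⟩
  rw [hpw]
  have hlen : (thePath S.hG w v).length = (thePath S.hG z v).length + 1 := by
    rw [hdec, Walk.length_cons]
  rw [S.length_symm v z, S.length_symm v w, hlen]

/-! ### The terminal assignment -/

/-- The set of terminals in the subtree below `v`. -/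
noncomputable def Sv (v : V) : Finset V :=
  Finset.univ.filter (fun s => s ∈ S.V' ∧ v ∈ (thePath S.hG s S.r).support)

lemma mem_Sv {v s : V} : s ∈ S.Sv v ↔ s ∈ S.V' ∧ v ∈ (thePath S.hG s S.r).support := by
  simp [Sv]

/-- Lexicographic key used to break ties among nearest terminals. -/
noncomputable def keyf (v s : V) : ℝ ×ₗ Fin (Fintype.card V) :=
  toLex (S.dm v s, (Fintype.equivFin V) s)

/-- The nearest terminal in the subtree below `v` (with ties broken consistently). -/
noncomputable def Nv (v : V) : V :=
  if h : (S.Sv v).Nonempty then (Finset.exists_min_image (S.Sv v) (S.keyf v) h).choose else v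

lemma Nv_mem {v : V} (h : (S.Sv v).Nonempty) : S.Nv v ∈ S.Sv v := by
  rw [Nv, dif_pos h]
  exact (Finset.exists_min_image (S.Sv v) (S.keyf v) h).choose_spec.1

lemma Nv_min {v : V} (h : (S.Sv v).Nonempty) :
    ∀ s ∈ S.Sv v, S.keyf v (S.Nv v) ≤ S.keyf v s := by
  rw [Nv, dif_pos h]
  exact (Finset.exists_min_image (S.Sv v) (S.keyf v) h).choose_spec.2

lemma Nv_unique {v t : V} (h : (S.Sv v).Nonempty) (ht : t ∈ S.Sv v)
    (hmin : ∀ s ∈ S.Sv v, S.keyf v t ≤ S.keyf v s) : S.Nv v = t := by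
  have h1 := S.Nv_min h t ht
  have h2 := hmin _ (S.Nv_mem h)
  have h3 : S.keyf v (S.Nv v) = S.keyf v t := le_antisymm h1 h2
  have h4 : (ofLex (S.keyf v (S.Nv v))).2 = (ofLex (S.keyf v t)).2 := by rw [h3]
  exact (Fintype.equivFin V).injective h4

lemma keyf_le_d {v s t : V} (h : S.keyf v t ≤ S.keyf v s) : S.dm v t ≤ S.dm v s := by
  rcases Prod.Lex.le_iff.mp h with h | h
  · exact le_of_lt h
  · exact le_of_eq h.1

lemma Nv_le {v : V} (h : (S.Sv v).Nonempty) {s : V} (hs : s ∈ S.Sv v) :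
    S.dm v (S.Nv v) ≤ S.dm v s :=
  S.keyf_le_d (S.Nv_min h s hs)

/-- The assignment function, with fuel. -/
noncomputable def fA : ℕ → V → V
  | 0, v => v
  | (n+1), v =>
    if v = S.r then S.r
    else if (S.Sv v).Nonempty ∧ 3 * S.dm v (S.Nv v) ≤ S.dm v (fA n (S.parentT v)) then S.Nv v
    else fA n (S.parentT v)

/-- The assignment of each vertex to a terminal. -/
noncomputable def fv (v : V) : V := S.fA (S.dep v + 1) v

lemma fA_stable : ∀ (n : ℕ) (v : V), S.dep v ≤ n → ∀ k, S.dep v < k → S.fA k v = S.fv v := by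
  intro n
  induction n with
  | zero =>
    intro v h0 k hk
    have hv : v = S.r := S.dep_eq_zero_iff.mp (le_antisymm h0 (Nat.zero_le _))
    subst hv
    obtain ⟨k', rfl⟩ : ∃ k', k = k' + 1 := ⟨k - 1, by omega⟩
    rw [fv]
    simp [fA]
  | succ n ih =>
    intro v hle k hk
    by_cases hv : v = S.r
    · subst hv
      obtain ⟨k', rfl⟩ : ∃ k', k = k' + 1 := ⟨k - 1, by omega⟩
      rw [fv]
      simp [fA]
    · have hpd : S.dep (S.parentT v) + 1 = S.dep v := S.dep_parentT hv
      obtain ⟨k', rfl⟩ : ∃ k', k = k' + 1 := ⟨k - 1, by omega⟩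
      have h1 : S.fA k' (S.parentT v) = S.fv (S.parentT v) := ih _ (by omega) _ (by omega)
      have h2 : S.fA (S.dep v) (S.parentT v) = S.fv (S.parentT v) := ih _ (by omega) _ (by omega)
      rw [fv]
      show S.fA (k' + 1) v = S.fA (S.dep v + 1) v
      simp only [fA, if_neg hv]
      rw [h1, h2]

lemma fv_eq {v : V} (hv : v ≠ S.r) :
    S.fv v = if (S.Sv v).Nonempty ∧ 3 * S.dm v (S.Nv v) ≤ S.dm v (S.fv (S.parentT v))
      then S.Nv v else S.fv (S.parentT v) := by
  have h2 : S.fA (S.dep v) (S.parentT v) = S.fv (S.parentT v) :=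
    S.fA_stable (S.dep (S.parentT v)) _ le_rfl _ (by have := S.dep_parentT hv; omega)
  rw [fv]
  simp only [fA, if_neg hv]
  rw [h2]

@[simp] lemma fv_r : S.fv S.r = S.r := by
  rw [fv]; simp [fA]

lemma fv_mem : ∀ v, S.fv v ∈ S.V' := by
  suffices h : ∀ (n : ℕ) (v : V), S.dep v ≤ n → S.fv v ∈ S.V' by
    intro v; exact h (S.dep v) v le_rfl
  intro n
  induction n with
  | zero =>
    intro v h0
    have hv : v = S.r := S.dep_eq_zero_iff.mp (le_antisymm h0 (Nat.zero_le _))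
    subst hv; rw [fv_r]; exact S.hr
  | succ n ih =>
    intro v hle
    by_cases hv : v = S.r
    · subst hv; rw [fv_r]; exact S.hr
    · rw [S.fv_eq hv]
      split_ifs with hc
      · exact (S.mem_Sv.mp (S.Nv_mem hc.1)).1
      · have := S.dep_parentT hv
        exact ih _ (by omega)

lemma fv_term {t : V} (ht : t ∈ S.V') : S.fv t = t := by
  by_cases htr : t = S.r
  · subst htr; exact S.fv_r
  have hne : (S.Sv t).Nonempty := ⟨t, S.mem_Sv.mpr ⟨ht, Walk.start_mem_support _⟩⟩
  have hNv : S.Nv t = t := by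
    apply S.Nv_unique hne (S.mem_Sv.mpr ⟨ht, Walk.start_mem_support _⟩)
    intro s hs
    rw [keyf, keyf, Prod.Lex.le_iff]
    rcases lt_or_eq_of_le (S.dm_nonneg t s) with h | h
    · left; rw [S.dm_self]; exact h
    · right
      have hst : s = t := (S.dm_eq_zero h.symm).symm
      subst hst
      exact ⟨rfl, le_rfl⟩
  rw [S.fv_eq htr, if_pos]
  · exact hNv
  · constructor
    · exact hne
    · rw [hNv, S.dm_self]
      have := S.dm_nonneg t (S.fv (S.parentT t))
      linarith

/-- Consistency of the nearest-terminal choice along the path towards it. -/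
lemma Nv_consist {v w : V} (hne : (S.Sv v).Nonempty)
    (hw : w ∈ (thePath S.hG v (S.Nv v)).support) :
    (S.Sv w).Nonempty ∧ S.Nv w = S.Nv v := by
  have htv : S.Nv v ∈ S.Sv v := S.Nv_mem hne
  have hanc : v ∈ (thePath S.hG (S.Nv v) S.r).support := (S.mem_Sv.mp htv).2
  have htV : S.Nv v ∈ S.V' := (S.mem_Sv.mp htv).1
  have hwmem : w ∈ (thePath S.hG (S.Nv v) S.r).support := S.anc1 hanc hw
  have htSw : S.Nv v ∈ S.Sv w := S.mem_Sv.mpr ⟨htV, hwmem⟩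
  have hnew : (S.Sv w).Nonempty := ⟨_, htSw⟩
  refine ⟨hnew, ?_⟩
  apply S.Nv_unique hnew htSw
  intro s hs
  -- s is also a candidate at v
  have hsv : s ∈ S.Sv v := by
    rcases S.mem_Sv.mp hs with ⟨hsV, hws⟩
    refine S.mem_Sv.mpr ⟨hsV, ?_⟩
    exact S.supp_trans hws (S.anc2 hanc hw)
  have hmin := S.Nv_min hne s hsv
  have hadd : S.dm v w + S.dm w (S.Nv v) = S.dm v (S.Nv v) := S.dadd hw
  have htri : S.dm v s ≤ S.dm v w + S.dm w s := S.dm_triangle v w s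
  rw [keyf, keyf, Prod.Lex.le_iff]
  rw [keyf, keyf, Prod.Lex.le_iff] at hmin
  rcases hmin with hlt | ⟨heq, hle⟩
  · simp only [ofLex_toLex] at hlt ⊢
    rcases lt_trichotomy (S.dm w (S.Nv v)) (S.dm w s) with h | h | h
    · exact Or.inl h
    · exfalso; rw [← h] at htri; linarith
    · exfalso; linarith
  · simp only [ofLex_toLex] at heq hle ⊢
    rcases lt_or_eq_of_le (show S.dm w (S.Nv v) ≤ S.dm w s by linarith) with h | h
    · exact Or.inl h
    · exact Or.inr ⟨h, hle⟩

/-- All vertices on the path from `v` down to its chosen nearest terminal get the same value. -/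
lemma fv_on_path {v : V} (hne : (S.Sv v).Nonempty) (hf : S.fv v = S.Nv v) :
    ∀ w ∈ (thePath S.hG v (S.Nv v)).support, S.fv w = S.Nv v := by
  have htv : S.Nv v ∈ S.Sv v := S.Nv_mem hne
  have hanc : v ∈ (thePath S.hG (S.Nv v) S.r).support := (S.mem_Sv.mp htv).2
  suffices h : ∀ (n : ℕ) (w : V), w ∈ (thePath S.hG v (S.Nv v)).support →
      (thePath S.hG v w).length = n → S.fv w = S.Nv v by
    intro w hw; exact h _ w hw rfl
  intro n
  induction n using Nat.strong_induction_on with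
  | _ n ih =>
    intro w hw hlen
    by_cases hwv : w = v
    · subst hwv; exact hf
    obtain ⟨hpmem, hplen, hwr⟩ := S.anc3 hanc hw hwv
    have hfp : S.fv (S.parentT w) = S.Nv v := ih _ (by omega) _ hpmem rfl
    obtain ⟨hnew, hNw⟩ := S.Nv_consist hne hw
    rw [S.fv_eq hwr]
    split_ifs with hc
    · exact hNw
    · exact hfp

/-! ### The climbing function -/

/-- Fuel version of `climb`. -/
noncomputable def cA : ℕ → V → V
  | 0, v => v
  | (n+1), v =>
    if v = S.r then v
    else if S.fv (S.parentT v) = S.fv v then cA n (S.parentT v) else v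

/-- The top of the contiguous segment of constant assignment above `v`. -/
noncomputable def climb (v : V) : V := S.cA (S.dep v + 1) v

lemma cA_stable : ∀ (n : ℕ) (v : V), S.dep v ≤ n → ∀ k, S.dep v < k → S.cA k v = S.climb v := by
  intro n
  induction n with
  | zero =>
    intro v h0 k hk
    have hv : v = S.r := S.dep_eq_zero_iff.mp (le_antisymm h0 (Nat.zero_le _))
    subst hv
    obtain ⟨k', rfl⟩ : ∃ k', k = k' + 1 := ⟨k - 1, by omega⟩
    rw [climb]
    simp [cA]
  | succ n ih =>
    intro v hle k hk
    by_cases hv : v = S.r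
    · subst hv
      obtain ⟨k', rfl⟩ : ∃ k', k = k' + 1 := ⟨k - 1, by omega⟩
      rw [climb]
      simp [cA]
    · have hpd : S.dep (S.parentT v) + 1 = S.dep v := S.dep_parentT hv
      obtain ⟨k', rfl⟩ : ∃ k', k = k' + 1 := ⟨k - 1, by omega⟩
      have h1 : S.cA k' (S.parentT v) = S.climb (S.parentT v) := ih _ (by omega) _ (by omega)
      have h2 : S.cA (S.dep v) (S.parentT v) = S.climb (S.parentT v) := ih _ (by omega) _ (by omega)
      rw [climb]
      show S.cA (k' + 1) v = S.cA (S.dep v + 1) v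
      simp only [cA, if_neg hv]
      rw [h1, h2]

lemma climb_eq' {v : V} (hv : v ≠ S.r) :
    S.climb v = if S.fv (S.parentT v) = S.fv v then S.climb (S.parentT v) else v := by
  have h2 : S.cA (S.dep v) (S.parentT v) = S.climb (S.parentT v) :=
    S.cA_stable (S.dep (S.parentT v)) _ le_rfl _ (by have := S.dep_parentT hv; omega)
  rw [climb]
  simp only [cA, if_neg hv]
  rw [h2]

@[simp] lemma climb_r : S.climb S.r = S.r := by
  rw [climb]; simp [cA]

lemma climb_ind (P : V → Prop) (hr : P S.r)
    (hkeep : ∀ v, v ≠ S.r → S.fv (S.parentT v) = S.fv v → P (S.parentT v) → P v)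
    (hstop : ∀ v, v ≠ S.r → S.fv (S.parentT v) ≠ S.fv v → P v) : ∀ v, P v := by
  suffices h : ∀ (n : ℕ) (v : V), S.dep v ≤ n → P v by
    intro v; exact h _ v le_rfl
  intro n
  induction n with
  | zero =>
    intro v h0
    have hv : v = S.r := S.dep_eq_zero_iff.mp (le_antisymm h0 (Nat.zero_le _))
    subst hv; exact hr
  | succ n ih =>
    intro v hle
    by_cases hv : v = S.r
    · subst hv; exact hr
    · have hpd : S.dep (S.parentT v) + 1 = S.dep v := S.dep_parentT hv
      by_cases hf : S.fv (S.parentT v) = S.fv v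
      · exact hkeep v hv hf (ih _ (by omega))
      · exact hstop v hv hf

lemma fv_climb (v : V) : S.fv (S.climb v) = S.fv v := by
  induction v using S.climb_ind with
  | hr => rw [climb_r]
  | hkeep v hv hf ih => rw [S.climb_eq' hv, if_pos hf, ih, hf]
  | hstop v hv hf => rw [S.climb_eq' hv, if_neg hf]

lemma dep_climb (v : V) : S.dep (S.climb v) ≤ S.dep v := by
  induction v using S.climb_ind with
  | hr => rw [climb_r]
  | hkeep v hv hf ih =>
    rw [S.climb_eq' hv, if_pos hf]
    have := S.dep_parentT hv
    omega
  | hstop v hv hf => rw [S.climb_eq' hv, if_neg hf]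

lemma climb_stop (v : V) :
    S.climb v = S.r ∨ S.fv (S.parentT (S.climb v)) ≠ S.fv (S.climb v) := by
  induction v using S.climb_ind with
  | hr => left; rw [climb_r]
  | hkeep v hv hf ih => rw [S.climb_eq' hv, if_pos hf]; exact ih
  | hstop v hv hf => rw [S.climb_eq' hv, if_neg hf]; exact Or.inr hf

/-- Characterisation of `climb` along a contiguous segment. -/
lemma climb_spec {t v₀ : V} (hanc : v₀ ∈ (thePath S.hG t S.r).support)
    (hall : ∀ w ∈ (thePath S.hG v₀ t).support, S.fv w = S.fv t)
    (hstop : S.fv (S.parentT v₀) ≠ S.fv t) : S.climb t = v₀ := by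
  suffices h : ∀ (n : ℕ) (w : V), w ∈ (thePath S.hG v₀ t).support →
      (thePath S.hG v₀ w).length = n → S.climb w = v₀ by
    exact h _ t (Walk.end_mem_support _) rfl
  intro n
  induction n using Nat.strong_induction_on with
  | _ n ih =>
    intro w hw hlen
    by_cases hwv : w = v₀
    · subst hwv
      have hv₀r : w ≠ S.r := by
        intro h
        apply hstop
        rw [h, S.parentT_r, ← h]
        exact hall w hw
      rw [S.climb_eq' hv₀r]
      rw [if_neg]
      rw [hall w hw]
      exact hstop
    obtain ⟨hpmem, hplen, hwr⟩ := S.anc3 hanc hw hwv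
    have hcp : S.climb (S.parentT w) = v₀ := ih _ (by omega) _ hpmem rfl
    rw [S.climb_eq' hwr, if_pos, hcp]
    rw [hall _ hpmem, hall _ hw]

/-! ### The parent map on terminals -/

/-- The parent of a terminal in the contracted tree. -/
noncomputable def parC (t : V) : V := S.fv (S.parentT (S.climb t))

lemma parC_mem (t : V) : S.parC t ∈ S.V' := S.fv_mem _

lemma parC_ne {t : V} (ht : t ∈ S.V') (htr : t ≠ S.r) : S.parC t ≠ t := by
  rcases S.climb_stop t with h | h
  · exfalso
    have h2 := S.fv_climb t
    rw [h, fv_r, S.fv_term ht] at h2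
    exact htr h2.symm
  · rw [parC]
    intro hcon
    apply h
    rw [hcon, S.fv_climb, S.fv_term ht]

lemma climb_ne_r {t : V} (ht : t ∈ S.V') (htr : t ≠ S.r) : S.climb t ≠ S.r := by
  intro h
  have h2 := S.fv_climb t
  rw [h, fv_r, S.fv_term ht] at h2
  exact htr h2.symm

lemma dep_pos {v : V} (hv : v ≠ S.r) : 0 < S.dep v := by
  rcases Nat.eq_zero_or_pos (S.dep v) with h | h
  · exact absurd (S.dep_eq_zero_iff.mp h) hv
  · exact h

/-- The key decrease property of the contracted parent map. -/
lemma parC_dep_lt {t : V} (ht : t ∈ S.V') (htr : t ≠ S.r) :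
    S.dep (S.climb (S.parC t)) < S.dep (S.climb t) := by
  have hct : S.climb t ≠ S.r := S.climb_ne_r ht htr
  have hdu : S.dep (S.parentT (S.climb t)) + 1 = S.dep (S.climb t) := S.dep_parentT hct
  set u := S.parentT (S.climb t) with hu
  have ht' : S.parC t = S.fv u := rfl
  rcases S.climb_stop u with hvr | hvstop
  · -- climb u = r, so fv u = fv r = r
    have h2 := S.fv_climb u
    rw [hvr, fv_r] at h2
    have h3 : S.parC t = S.r := by rw [ht', ← h2]
    rw [h3, climb_r]
    have h4 : S.dep S.r = 0 := S.dep_eq_zero_iff.mpr rfl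
    rw [h4]
    exact S.dep_pos hct
  · -- the birth vertex v* = climb u
    set v₁ := S.climb u with hv₁
    have hfv₁ : S.fv v₁ = S.fv u := S.fv_climb u
    have hv₁r : v₁ ≠ S.r := by
      intro h
      rw [h, S.parentT_r] at hvstop
      exact hvstop rfl
    -- f v₁ ≠ f (parentT v₁), so by fv_eq the vertex v₁ switched: fv v₁ = Nv v₁
    have hswitch : S.fv v₁ = S.Nv v₁ ∧ (S.Sv v₁).Nonempty := by
      have heq := S.fv_eq hv₁r
      by_cases hc : (S.Sv v₁).Nonempty ∧
          3 * S.dm v₁ (S.Nv v₁) ≤ S.dm v₁ (S.fv (S.parentT v₁))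
      · rw [if_pos hc] at heq; exact ⟨heq, hc.1⟩
      · rw [if_neg hc] at heq
        exact absurd heq.symm hvstop
    -- fv u = Nv v₁
    have hNu : S.Nv v₁ = S.fv u := by rw [← hswitch.1, hfv₁]
    -- now apply climb_spec to t' := fv u
    have hanc : v₁ ∈ (thePath S.hG (S.Nv v₁) S.r).support :=
      (S.mem_Sv.mp (S.Nv_mem hswitch.2)).2
    have hall : ∀ w ∈ (thePath S.hG v₁ (S.Nv v₁)).support, S.fv w = S.fv (S.Nv v₁) := by
      intro w hw
      rw [S.fv_on_path hswitch.2 hswitch.1 w hw]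
      rw [S.fv_term (S.mem_Sv.mp (S.Nv_mem hswitch.2)).1]
    have hstop2 : S.fv (S.parentT v₁) ≠ S.fv (S.Nv v₁) := by
      rw [S.fv_term (S.mem_Sv.mp (S.Nv_mem hswitch.2)).1, hNu, ← hfv₁]
      exact hvstop
    have hclimb : S.climb (S.Nv v₁) = v₁ := S.climb_spec hanc hall hstop2
    have h5 : S.dep (S.climb (S.parC t)) = S.dep v₁ := by
      rw [ht', ← hNu, hclimb]
    rw [h5, hv₁]
    have h6 := S.dep_climb u
    omega

@[simp] lemma parC_r : S.parC S.r = S.r := by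
  rw [parC, climb_r, parentT_r, fv_r]

/-! ### The contracted graph -/

/-- The contracted graph on the terminals. -/
noncomputable def Gq : SimpleGraph ↥S.V' where
  Adj a b := a ≠ b ∧ (S.parC ↑a = ↑b ∨ S.parC ↑b = ↑a)
  symm := by constructor; rintro a b ⟨h1, h2⟩; exact ⟨h1.symm, h2.symm⟩
  loopless := by constructor; rintro a ⟨h1, _⟩; exact h1 rfl

/-- The weight function on the contracted graph. -/
noncomputable def Wq : Sym2 ↥S.V' → ℝ :=
  Sym2.lift ⟨fun a b => S.dm ↑a ↑b / 4, fun a b => by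
    show S.dm ↑a ↑b / 4 = S.dm ↑b ↑a / 4
    rw [S.dm_symm ↑a ↑b]⟩

@[simp] lemma Wq_eval (a b : ↥S.V') : S.Wq s(a, b) = S.dm ↑a ↑b / 4 := rfl

/-- Depth used for induction on the contracted tree. -/
noncomputable def hdepq (a : ↥S.V') : ℕ := S.dep (S.climb ↑a)

lemma ori {a b : ↥S.V'} (h : S.Gq.Adj a b) :
    (S.parC ↑a = ↑b ∧ S.hdepq b < S.hdepq a) ∨
      (S.parC ↑b = ↑a ∧ S.hdepq a < S.hdepq b) := by
  obtain ⟨hne, hor⟩ := h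
  have key : ∀ u w : ↥S.V', u ≠ w → S.parC ↑u = ↑w → S.hdepq w < S.hdepq u := by
    intro u w huw hp
    have hur : (↑u : V) ≠ S.r := by
      intro hur
      apply huw
      apply Subtype.ext
      have : S.parC ↑u = ↑u := by rw [hur]; exact S.parC_r
      rw [← hp, this]
    have h2 := S.parC_dep_lt u.2 hur
    rw [hp] at h2
    exact h2
  rcases hor with h1 | h1
  · exact Or.inl ⟨h1, key a b hne h1⟩
  · exact Or.inr ⟨h1, key b a (Ne.symm hne) h1⟩

lemma gq_preconnected : S.Gq.Preconnected := by
  have key : ∀ (n : ℕ) (a : ↥S.V'), S.hdepq a ≤ n → S.Gq.Reachable a ⟨S.r, S.hr⟩ := by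
    intro n
    induction n using Nat.strong_induction_on with
    | _ n ih =>
      intro a hle
      by_cases ha : (↑a : V) = S.r
      · rw [show a = ⟨S.r, S.hr⟩ from Subtype.ext ha]
      · set b : ↥S.V' := ⟨S.parC ↑a, S.parC_mem ↑a⟩ with hb
        have hadj : S.Gq.Adj a b := by
          refine ⟨?_, Or.inl rfl⟩
          intro hcon
          exact S.parC_ne a.2 ha ((congrArg Subtype.val hcon).symm)
        have hlt : S.hdepq b < S.hdepq a := S.parC_dep_lt a.2 ha
        have := ih (S.hdepq b) (by omega) b le_rfl
        exact (hadj.reachable).trans this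
  intro u v
  exact (key _ u le_rfl).trans (key _ v le_rfl).symm

lemma gq_acyclic : S.Gq.IsAcyclic := by
  intro z c hc
  have hne : c.support ≠ [] := Walk.support_ne_nil _
  obtain ⟨x, hx⟩ : ∃ x, c.support.argmax S.hdepq = some x := by
    cases h : c.support.argmax S.hdepq with
    | none => exact absurd (List.argmax_eq_none.mp h) hne
    | some x => exact ⟨x, rfl⟩
  have hxmem : x ∈ c.support := List.argmax_mem hx
  have hxmax : ∀ y ∈ c.support, S.hdepq y ≤ S.hdepq x :=
    fun y hy => List.le_of_mem_argmax hy hx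
  have hcyc : (c.rotate x hxmem).IsCycle := hc.rotate hxmem
  have hsupp : ∀ y ∈ (c.rotate x hxmem).support, S.hdepq y ≤ S.hdepq x := by
    intro y hy
    rw [Walk.support_eq_cons] at hy
    rcases List.mem_cons.mp hy with hy | hy
    · subst hy; exact le_rfl
    · exact hxmax y (List.mem_of_mem_tail
        (((Walk.support_rotate c x hxmem).mem_iff).mp hy))
  obtain ⟨a, hadj1, q, hq⟩ := Walk.not_nil_iff.mp hcyc.not_nil
  have hq_cyc := hcyc
  rw [hq, Walk.cons_isCycle_iff] at hq_cyc
  obtain ⟨hq_path, hq_notmem⟩ := hq_cyc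
  have hxa : x ≠ a := hadj1.ne
  have hax : a ≠ x := hadj1.ne'
  obtain ⟨b, hadj2, q2, hq2⟩ := Walk.not_nil_iff.mp
    (Walk.not_nil_of_ne hxa : ¬(q.reverse : S.Gq.Walk x a).Nil)
  have hb_edge : s(x, b) ∈ q.edges := by
    have h3 : s(x, b) ∈ q.reverse.edges := by
      rw [hq2, Walk.edges_cons]; exact List.mem_cons_self
    rwa [Walk.edges_reverse, List.mem_reverse] at h3
  have hamem : a ∈ (c.rotate x hxmem).support := by
    rw [hq, Walk.support_cons]
    exact List.mem_cons_of_mem _ (Walk.start_mem_support q)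
  have hbmem : b ∈ (c.rotate x hxmem).support := by
    have hbq : b ∈ q.support := by
      have h4 : b ∈ q.reverse.support := by
        rw [hq2, Walk.support_cons]
        exact List.mem_cons_of_mem _ (Walk.start_mem_support _)
      rwa [Walk.support_reverse, List.mem_reverse] at h4
    rw [hq, Walk.support_cons]
    exact List.mem_cons_of_mem _ hbq
  have h1 : S.parC ↑x = ↑a := by
    rcases S.ori hadj1 with ⟨h, _⟩ | ⟨_, hlt⟩
    · exact h
    · exact absurd hlt (not_lt.mpr (hsupp a hamem))
  have h2 : S.parC ↑x = ↑b := by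
    rcases S.ori hadj2 with ⟨h, _⟩ | ⟨_, hlt⟩
    · exact h
    · exact absurd hlt (not_lt.mpr (hsupp b hbmem))
  have hab : a = b := Subtype.ext (h1.symm.trans h2)
  exact hq_notmem (hab ▸ hb_edge)

lemma gq_isTree : S.Gq.IsTree := by
  haveI : Nonempty ↥S.V' := ⟨⟨S.r, S.hr⟩⟩
  exact ⟨SimpleGraph.Connected.mk S.gq_preconnected, S.gq_acyclic⟩

/-! ### The main distortion estimate -/

/-- Main upward induction: walking from a terminal `x` up to an ancestor `v`, there is a walk
in the contracted graph from `x` to the terminal assigned to `v` of controlled cost. -/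
lemma up (x : V) (hx : x ∈ S.V') :
    ∀ (n : ℕ) (v : V), v ∈ (thePath S.hG x S.r).support → (thePath S.hG x v).length = n →
    ∃ q : S.Gq.Walk ⟨x, hx⟩ ⟨S.fv v, S.fv_mem v⟩,
      wcost S.Wq q ≤ (S.dm x v + S.dm v (S.fv v)) / 2 := by
  intro n
  induction n using Nat.strong_induction_on with
  | _ n ih =>
    intro v hv hlen
    by_cases hvx : v = x
    · subst hvx
      refine ⟨(Walk.nil : S.Gq.Walk ⟨v, hx⟩ ⟨v, hx⟩).copy rfl
        (Subtype.ext (S.fv_term hx).symm), ?_⟩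
      rw [wcost_copy, wcost_nil, S.fv_term hx, S.dm_self]
      norm_num
    have hvx' : v ≠ x := hvx
    obtain ⟨w, hadjvw, hwz, hdec⟩ := S.dec' hvx'
    have hwv : w ≠ v := hadjvw.ne'
    have hwmem : w ∈ (thePath S.hG v x).support := by
      rw [hwz]; exact S.getVert_one_mem hvx'
    have hvw_r : v ∈ (thePath S.hG w S.r).support := S.anc2 hv hwmem
    have hsingle : (Walk.cons hadjvw.symm Walk.nil : S.G.Walk w v) = thePath S.hG w v :=
      path_eq S.hG (Path.singleton hadjvw.symm).property
    have hpw : S.parentT w = v := by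
      rw [parentT, S.app_eq hvw_r, ← hsingle, Walk.cons_append, Walk.getVert_cons_succ,
        Walk.getVert_zero]
    have hwmem_r : w ∈ (thePath S.hG x S.r).support := by
      rw [S.app_eq hv, Walk.mem_support_append_iff]
      exact Or.inl (mem_rev S.hG hwmem)
    have hlw : (thePath S.hG x w).length + 1 = (thePath S.hG x v).length := by
      have h5 : (thePath S.hG v x).length = (thePath S.hG w x).length + 1 := by
        rw [hdec, Walk.length_cons]
      rw [S.length_symm x w, S.length_symm x v, h5]
    have hxwv : S.dm x w + S.dm w v = S.dm x v := S.dadd (mem_rev S.hG hwmem)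
    obtain ⟨q₁, hq₁⟩ := ih _ (by omega) w hwmem_r rfl
    have hwr : w ≠ S.r := by
      intro h
      apply hwv
      rw [h]
      rw [h, S.parentT_r] at hpw
      exact hpw
    by_cases hchange : S.fv w = S.fv v
    · refine ⟨q₁.copy rfl (Subtype.ext hchange), ?_⟩
      rw [wcost_copy]
      have htri : S.dm w (S.fv w) ≤ S.dm w v + S.dm v (S.fv v) := by
        rw [hchange]; exact S.dm_triangle _ _ _
      linarith [hq₁]
    · have hfeq := S.fv_eq hwr
      rw [hpw] at hfeq
      have hcond : (S.Sv w).Nonempty ∧ 3 * S.dm w (S.Nv w) ≤ S.dm w (S.fv v) := by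
        by_contra hcon
        rw [if_neg hcon] at hfeq
        exact hchange hfeq
      rw [if_pos hcond] at hfeq
      have hNvV' : S.Nv w ∈ S.V' := (S.mem_Sv.mp (S.Nv_mem hcond.1)).1
      have hancw : w ∈ (thePath S.hG (S.Nv w) S.r).support :=
        (S.mem_Sv.mp (S.Nv_mem hcond.1)).2
      have hallw : ∀ u ∈ (thePath S.hG w (S.Nv w)).support, S.fv u = S.fv (S.Nv w) := by
        intro u hu
        rw [S.fv_on_path hcond.1 hfeq u hu, S.fv_term hNvV']
      have hstopw : S.fv (S.parentT w) ≠ S.fv (S.Nv w) := by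
        rw [hpw, S.fv_term hNvV', ← hfeq]
        exact fun hh => hchange hh.symm
      have hclimbw : S.climb (S.Nv w) = w := S.climb_spec hancw hallw hstopw
      have hparC : S.parC (S.Nv w) = S.fv v := by rw [parC, hclimbw, hpw]
      have hne2 : (⟨S.fv w, S.fv_mem w⟩ : ↥S.V') ≠ ⟨S.fv v, S.fv_mem v⟩ :=
        fun hh => hchange (congrArg Subtype.val hh)
      have hadjq : S.Gq.Adj ⟨S.fv w, S.fv_mem w⟩ ⟨S.fv v, S.fv_mem v⟩ := by
        refine ⟨hne2, Or.inl ?_⟩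
        show S.parC (S.fv w) = S.fv v
        rw [hfeq]
        exact hparC
      refine ⟨q₁.concat hadjq, ?_⟩
      rw [wcost_concat, Wq_eval]
      have hswitch : 3 * S.dm w (S.fv w) ≤ S.dm w (S.fv v) := by
        rw [hfeq]; exact hcond.2
      have htri1 : S.dm (S.fv w) (S.fv v) ≤ S.dm (S.fv w) w + S.dm w v + S.dm v (S.fv v) := by
        have t1 := S.dm_triangle (S.fv w) w (S.fv v)
        have t2 := S.dm_triangle w v (S.fv v)
        linarith
      have htri2 : S.dm w (S.fv v) ≤ S.dm w v + S.dm v (S.fv v) := S.dm_triangle _ _ _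
      have hsym1 := S.dm_symm (S.fv w) w
      linarith [hq₁]

/-- The distance from a common ancestor to its assigned terminal is controlled. -/
lemma apex_bound {x c : V} (hx : x ∈ S.V') (hc : c ∈ (thePath S.hG x S.r).support) :
    S.dm c (S.fv c) ≤ 3 * S.dm c x := by
  by_cases hcr : c = S.r
  · subst hcr
    rw [fv_r, S.dm_self]
    have := S.dm_nonneg S.r x
    linarith
  have hxSc : x ∈ S.Sv c := S.mem_Sv.mpr ⟨hx, hc⟩
  have hne : (S.Sv c).Nonempty := ⟨x, hxSc⟩
  have hNle : S.dm c (S.Nv c) ≤ S.dm c x := S.Nv_le hne hxSc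
  have heq := S.fv_eq hcr
  split_ifs at heq with hcond
  · rw [heq]; linarith [S.dm_nonneg c x]
  · push_neg at hcond
    have h2 := hcond hne
    rw [heq]
    linarith

/-- Any walk in the contracted graph has cost at least a quarter of the distance. -/
lemma lower_walk : ∀ {u v : ↥S.V'} (q : S.Gq.Walk u v), S.dm ↑u ↑v / 4 ≤ wcost S.Wq q := by
  intro u v q
  induction q with
  | nil =>
    rw [wcost_nil, S.dm_self]
    norm_num
  | @cons a b c h p ih =>
    rw [wcost_cons, Wq_eval]
    have htri := S.dm_triangle ↑a ↑b ↑c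
    linarith

/-- The main upper bound: between any two terminals there is a walk in the contracted graph
of cost at most twice their distance. -/
lemma upper (x y : ↥S.V') :
    ∃ q : S.Gq.Walk x y, wcost S.Wq q ≤ 2 * S.dm ↑x ↑y := by
  obtain ⟨c, hc1, hc2, hc3⟩ := S.lca (S.dep ↑x) ↑y rfl
  obtain ⟨q₁, hq₁⟩ := S.up ↑x x.2 _ c hc1 rfl
  obtain ⟨q₂, hq₂⟩ := S.up ↑y y.2 _ c hc2 rfl
  refine ⟨q₁.append q₂.reverse, ?_⟩
  rw [wcost_append, wcost_reverse]
  have ha1 : S.dm c (S.fv c) ≤ 3 * S.dm c ↑x := S.apex_bound x.2 hc1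
  have ha2 : S.dm c (S.fv c) ≤ 3 * S.dm c ↑y := S.apex_bound y.2 hc2
  have hs1 := S.dm_symm ↑x c
  have hs2 := S.dm_symm c ↑y
  linarith [hq₁, hq₂]

lemma Wq_pos : ∀ e ∈ S.Gq.edgeSet, 0 < S.Wq e := by
  intro e
  induction e using Sym2.ind with
  | _ a b =>
    intro he
    rw [SimpleGraph.mem_edgeSet] at he
    rw [Wq_eval]
    have hne : (↑a : V) ≠ ↑b := fun hh => he.1 (Subtype.ext hh)
    have := S.dm_pos hne
    linarith

end GSetup

end GuptaSetup

/-- **Gupta's Restriction Theorem.**  Let `T = (V, E)` be a finite weighted tree with geodesic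
metric `d`, and let `V' ⊆ V` be nonempty.  Then there is a weighted tree on the vertex set `V'`
whose geodesic metric `d'` satisfies `(1/4) · d x y ≤ d' x y ≤ 2 · d x y` for all `x, y ∈ V'`. -/
theorem gupta_restriction {V : Type*} [Fintype V] (G : SimpleGraph V) (hG : G.IsTree)
    (W : Sym2 V → ℝ) (hW : ∀ e ∈ G.edgeSet, 0 < W e)
    (d : V → V → ℝ) (hd : IsGeodesicOf G W d)
    (V' : Set V) (hV' : V'.Nonempty) :
    ∃ (G' : SimpleGraph V') (W' : Sym2 V' → ℝ) (d' : ↥V' → ↥V' → ℝ),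
      G'.IsTree ∧ (∀ e ∈ G'.edgeSet, 0 < W' e) ∧ IsGeodesicOf G' W' d' ∧
      ∀ x y : V', (1 / 4) * d ↑x ↑y ≤ d' x y ∧ d' x y ≤ 2 * d ↑x ↑y := by
  classical
  obtain ⟨r, hr⟩ := hV'
  haveI : Fintype ↥V' := Fintype.ofFinite _
  set S : GSetup V := ⟨G, hG, W, hW, V', r, hr⟩ with hS
  have hdm : ∀ u v : V, d u v = S.dm u v := by
    intro u v
    obtain ⟨⟨p, hp, hc⟩, -⟩ := hd u v
    rw [hc]
    exact S.path_cost hp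
  have hT' := S.gq_isTree
  haveI : Nonempty ↥V' := ⟨⟨r, hr⟩⟩
  -- the contracted tree setup (to reuse the generic lemmas about geodesics in trees)
  set S' : GSetup ↥V' := ⟨S.Gq, hT', S.Wq, S.Wq_pos, Set.univ, ⟨r, hr⟩, Set.mem_univ _⟩
    with hS'
  refine ⟨S.Gq, S.Wq, S'.dm, hT', S.Wq_pos, ?_, ?_⟩
  · exact GuptaAux.tree_geodesic hT' S.Wq
  · intro x y
    constructor
    · -- lower bound
      have h1 := S.lower_walk (GuptaAux.thePath hT' x y)
      have h2 : S'.dm x y = GuptaAux.wcost S.Wq (GuptaAux.thePath hT' x y) := rfl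
      rw [hdm ↑x ↑y, h2]
      linarith
    · -- upper bound
      obtain ⟨q, hq⟩ := S.upper x y
      have h2 : S'.dm x y ≤ GuptaAux.wcost S.Wq q := S'.dm_le_wcost q
      rw [hdm ↑x ↑y]
      linarith
end

section
/- Sobolev inequality from isoperimetric inequality: Let G = (V,E) be a finite connected graph with a geodesic metric d, let ν be a probability measure on E with full support, and let μ be the probability on V defined by μ(v) = (1/2)·Σ_{e∈E, v∈e} ν(e). Let δ ∈ [1,∞) and C > 0, and assume that for every A ⊂ V, min{μ(A), μ(V\A)}^{(δ−1)/δ} ≤ C·Σ_{e∈∂_G A} ν(e)/d(e), where ∂_G A is the set of edges with exactly one endpoint in A and d({u,v}) = d(u,v). Then for every f: V → ℝ, (Σ_{v∈V} |f(v) − E_μ f|^{δ'} μ(v))^{1/δ'} ≤ 2C·Σ_{e={u,v}∈E} (|f(u) − f(v)|/d(u,v))·ν(e), where E_μ f = Σ_{v∈V} f(v)μ(v) and δ' satisfies 1/δ + 1/δ' = 1. -/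
open scoped BigOperators Classical

/-- The probability on the vertices induced by a probability `ν` on the edges of `G`:
`μ v = (1/2) · ∑_{e ∈ E, v ∈ e} ν e`. -/
noncomputable def inducedProb {V : Type*} [Fintype V] (G : SimpleGraph V)
    (ν : Sym2 V → ℝ) (v : V) : ℝ :=
  (1 / 2) * ∑ e : Sym2 V, if e ∈ G.edgeSet ∧ v ∈ e then ν e else 0

open Finset

lemma aux_add_rpow_le {a b p : ℝ} (ha : 0 ≤ a) (hb : 0 ≤ b) (hp : 1 ≤ p) :
    a ^ p + b ^ p ≤ (a + b) ^ p := by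
  lift a to NNReal using ha
  lift b to NNReal using hb
  have := NNReal.add_rpow_le_rpow_add a b hp
  exact_mod_cast this

lemma aux_minkowski {V : Type*} [Fintype V] {p : ℝ} (hp : 1 ≤ p)
    (μ F G : V → ℝ) (hμ : ∀ v, 0 ≤ μ v) :
    (∑ v, |F v + G v| ^ p * μ v) ^ (1/p) ≤
      (∑ v, |F v| ^ p * μ v) ^ (1/p) + (∑ v, |G v| ^ p * μ v) ^ (1/p) := by
  have hp0 : p ≠ 0 := by positivity
  have key : ∀ H : V → ℝ, ∀ v : V, |H v| ^ p * μ v = |H v * μ v ^ (1/p)| ^ p := by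
    intro H v
    rw [abs_mul, abs_of_nonneg (Real.rpow_nonneg (hμ v) _),
      Real.mul_rpow (abs_nonneg _) (Real.rpow_nonneg (hμ v) _),
      ← Real.rpow_mul (hμ v), one_div_mul_cancel hp0, Real.rpow_one]
  have h := Real.Lp_add_le Finset.univ (fun v => F v * μ v ^ (1/p))
      (fun v => G v * μ v ^ (1/p)) hp
  have e1 : ∀ H : V → ℝ,
      (∑ v, |H v| ^ p * μ v) = ∑ v, |H v * μ v ^ (1/p)| ^ p :=
    fun H => Finset.sum_congr rfl fun v _ => key H v
  rw [e1 (fun v => F v + G v), e1 F, e1 G]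
  simpa only [add_mul] using h

lemma aux_L1_le_Lp {V : Type*} [Fintype V] {p q : ℝ} (hpq : Real.HolderConjugate p q)
    (μ F : V → ℝ) (hμ : ∀ v, 0 ≤ μ v) (hμ1 : ∑ v, μ v = 1) :
    ∑ v, |F v| * μ v ≤ (∑ v, |F v| ^ p * μ v) ^ (1/p) := by
  have hp0 : p ≠ 0 := hpq.ne_zero
  have hq0 : q ≠ 0 := hpq.symm.ne_zero
  have h := Real.inner_le_Lp_mul_Lq Finset.univ (fun v => |F v| * μ v ^ (1/p))
      (fun v => μ v ^ (1/q)) hpq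
  have e0 : ∀ v : V, (|F v| * μ v ^ (1/p)) * μ v ^ (1/q) = |F v| * μ v := by
    intro v
    rw [mul_assoc, ← Real.rpow_add' (hμ v) (by rw [one_div, one_div, hpq.inv_add_inv_eq_one]; norm_num),
      show (1/p + 1/q : ℝ) = 1 by rw [one_div, one_div, hpq.inv_add_inv_eq_one], Real.rpow_one]
  have e1 : ∀ v : V, (abs (|F v| * μ v ^ (1/p))) ^ p = |F v| ^ p * μ v := by
    intro v
    rw [abs_mul, abs_abs, abs_of_nonneg (Real.rpow_nonneg (hμ v) _),
      Real.mul_rpow (abs_nonneg _) (Real.rpow_nonneg (hμ v) _),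
      ← Real.rpow_mul (hμ v), one_div_mul_cancel hp0, Real.rpow_one]
  have e2 : ∀ v : V, |μ v ^ (1/q)| ^ q = μ v := by
    intro v
    rw [abs_of_nonneg (Real.rpow_nonneg (hμ v) _),
      ← Real.rpow_mul (hμ v), one_div_mul_cancel hq0, Real.rpow_one]
  calc ∑ v, |F v| * μ v = ∑ v, (|F v| * μ v ^ (1/p)) * μ v ^ (1/q) :=
        (Finset.sum_congr rfl fun v _ => (e0 v).symm)
    _ ≤ (∑ v, (abs (|F v| * μ v ^ (1/p))) ^ p) ^ (1/p) * (∑ v, |μ v ^ (1/q)| ^ q) ^ (1/q) := h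
    _ = (∑ v, |F v| ^ p * μ v) ^ (1/p) * (∑ v, μ v) ^ (1/q) := by
        rw [Finset.sum_congr rfl fun v _ => e1 v, Finset.sum_congr rfl fun v _ => e2 v]
    _ = (∑ v, |F v| ^ p * μ v) ^ (1/p) := by rw [hμ1, Real.one_rpow, mul_one]

lemma pos_part_abs_split (a b : ℝ) :
    |max a 0 - max b 0| + |max (-a) 0 - max (-b) 0| = |a - b| := by
  rcases le_total a 0 with ha | ha <;> rcases le_total b 0 with hb | hb
  · rw [max_eq_right ha, max_eq_right hb, max_eq_left (neg_nonneg.2 ha),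
      max_eq_left (neg_nonneg.2 hb), sub_zero, abs_zero, neg_sub_neg, abs_sub_comm b a, zero_add]
  · rw [max_eq_right ha, max_eq_left hb, max_eq_left (neg_nonneg.2 ha),
      max_eq_right (neg_nonpos.2 hb), zero_sub, abs_neg, sub_zero, abs_of_nonneg hb,
      abs_of_nonneg (neg_nonneg.2 ha), abs_of_nonpos (by linarith : a - b ≤ 0)]
    ring
  · rw [max_eq_left ha, max_eq_right hb, max_eq_right (neg_nonpos.2 ha),
      max_eq_left (neg_nonneg.2 hb), sub_zero, zero_sub, abs_neg, abs_neg, abs_of_nonneg ha,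
      abs_of_nonpos hb, abs_of_nonneg (by linarith : (0:ℝ) ≤ a - b)]
    ring
  · rw [max_eq_left ha, max_eq_left hb, max_eq_right (neg_nonpos.2 ha),
      max_eq_right (neg_nonpos.2 hb), sub_zero, abs_zero, add_zero]

lemma aux_key {V ι : Type*} [Fintype V] [Fintype ι] (μ : V → ℝ) (hμ : ∀ v, 0 ≤ μ v)
    (a b : ι → V) (w : ι → ℝ) (p C : ℝ) (hp : 1 ≤ p) (hC : 0 ≤ C)
    (S : Finset V)
    (hiso : ∀ A : Finset V, A ⊆ S →
      (∑ v ∈ A, μ v) ^ (1/p) ≤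
        C * ∑ i, (if (a i ∈ A ∧ b i ∉ A) ∨ (b i ∈ A ∧ a i ∉ A) then w i else 0)) :
    ∀ (n : ℕ) (h : V → ℝ), (∀ v, 0 ≤ h v) → (∀ v, 0 < h v → v ∈ S) →
      ((Finset.image h Finset.univ).erase 0).card ≤ n →
      (∑ v, h v ^ p * μ v) ^ (1/p) ≤ C * ∑ i, |h (a i) - h (b i)| * w i := by
  have hp0 : p ≠ 0 := by positivity
  have hbase : ∀ h : V → ℝ, (∀ v, h v = 0) →
      (∑ v, h v ^ p * μ v) ^ (1/p) ≤ C * ∑ i, |h (a i) - h (b i)| * w i := by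
    intro h h0
    simp [h0, Real.zero_rpow hp0, Real.zero_rpow (one_div_ne_zero hp0), Real.zero_rpow (inv_ne_zero hp0)]
  intro n
  induction n with
  | zero =>
    intro h hh hS hcard
    refine hbase h fun v => ?_
    by_contra hv
    have : h v ∈ (Finset.image h Finset.univ).erase 0 :=
      Finset.mem_erase.mpr ⟨hv, Finset.mem_image_of_mem _ (Finset.mem_univ v)⟩
    rw [Finset.card_eq_zero.mp (Nat.le_zero.mp hcard)] at this
    exact absurd this (Finset.notMem_empty _)
  | succ n ih =>
    intro h hh hS hcard
    by_cases h0 : ∀ v, h v = 0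
    · exact hbase h h0
    push_neg at h0
    obtain ⟨v0, hv0⟩ := h0
    set T : Finset ℝ := (Finset.image h Finset.univ).erase 0 with hT
    have hmemT : ∀ v : V, h v ≠ 0 → h v ∈ T := fun v hv =>
      Finset.mem_erase.mpr ⟨hv, Finset.mem_image_of_mem _ (Finset.mem_univ v)⟩
    have hTne : T.Nonempty := ⟨h v0, hmemT v0 hv0⟩
    set t1 := T.min' hTne with ht1def
    have ht1mem : t1 ∈ T := T.min'_mem hTne
    have ht1pos : 0 < t1 := by
      obtain ⟨hne, hmem⟩ := Finset.mem_erase.mp ht1mem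
      obtain ⟨v, -, hv⟩ := Finset.mem_image.mp hmem
      have := hh v
      rw [hv] at this
      exact lt_of_le_of_ne this (Ne.symm hne)
    have ht1le : ∀ v, h v ≠ 0 → t1 ≤ h v := fun v hv => T.min'_le _ (hmemT v hv)
    have hpos : ∀ v, h v ≠ 0 → 0 < h v := fun v hv => lt_of_le_of_ne (hh v) (Ne.symm hv)
    set A : Finset V := Finset.univ.filter (fun v => h v ≠ 0) with hA
    have hmemA : ∀ v : V, v ∈ A ↔ h v ≠ 0 := by
      intro v; simp [hA]
    set h' : V → ℝ := fun v => if h v = 0 then 0 else h v - t1 with hh'def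
    have hh' : ∀ v, 0 ≤ h' v := by
      intro v
      simp only [hh'def]
      split
      · exact le_refl 0
      · next hv => linarith [ht1le v hv]
    have hS' : ∀ v, 0 < h' v → v ∈ S := by
      intro v hv
      apply hS
      simp only [hh'def] at hv
      split at hv
      · exact absurd hv (lt_irrefl 0)
      · next hvne => exact hpos v hvne
    -- cardinality decreases
    have hcard' : ((Finset.image h' Finset.univ).erase 0).card ≤ n := by
      have hsub : (Finset.image h' Finset.univ).erase 0 ⊆
          (T.erase t1).image (fun x => x - t1) := by
        intro y hy
        obtain ⟨hyne, hymem⟩ := Finset.mem_erase.mp hy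
        obtain ⟨v, -, hv⟩ := Finset.mem_image.mp hymem
        have hvne : h v ≠ 0 := by
          intro hz
          apply hyne
          rw [← hv]; simp [hh'def, hz]
        have hy' : y = h v - t1 := by rw [← hv]; simp [hh'def, hvne]
        refine Finset.mem_image.mpr ⟨h v, Finset.mem_erase.mpr ⟨?_, hmemT v hvne⟩, hy'.symm⟩
        intro he
        apply hyne
        rw [hy', he, sub_self]
      calc ((Finset.image h' Finset.univ).erase 0).card
          ≤ ((T.erase t1).image (fun x => x - t1)).card := Finset.card_le_card hsub
        _ ≤ (T.erase t1).card := Finset.card_image_le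
        _ = T.card - 1 := Finset.card_erase_of_mem ht1mem
        _ ≤ n := by omega
    have IH := ih h' hh' hS' hcard'
    have hAS : A ⊆ S := by
      intro v hv
      exact hS v (hpos v ((hmemA v).mp hv))
    have hisoA := hiso A hAS
    -- decomposition of h
    have hdec : ∀ v, h v = t1 * (if v ∈ A then 1 else 0) + h' v := by
      intro v
      by_cases hv : h v = 0 <;> simp [hh'def, hmemA, hv] <;> ring
    -- edge identity
    have hedge : ∀ x y : V, |h x - h y| =
        t1 * (if (x ∈ A ∧ y ∉ A) ∨ (y ∈ A ∧ x ∉ A) then 1 else 0) + |h' x - h' y| := by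
      intro x y
      by_cases hx : h x = 0 <;> by_cases hy : h y = 0
      · have hxA : x ∉ A := fun hc => (hmemA x).mp hc hx
        have hyA : y ∉ A := fun hc => (hmemA y).mp hc hy
        have hx' : h' x = 0 := by simp [hh'def, hx]
        have hy' : h' y = 0 := by simp [hh'def, hy]
        rw [if_neg (by tauto), mul_zero, zero_add, hx, hy, hx', hy']
      · have hxA : x ∉ A := fun hc => (hmemA x).mp hc hx
        have hyA : y ∈ A := (hmemA y).mpr hy
        have hx' : h' x = 0 := by simp [hh'def, hx]
        have hy' : h' y = h y - t1 := by simp [hh'def, hy]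
        have h1 := ht1le y hy
        rw [if_pos (Or.inr ⟨hyA, hxA⟩), mul_one, hx, hx', hy', zero_sub, zero_sub,
          abs_neg, abs_neg, abs_of_nonneg (by linarith : (0:ℝ) ≤ h y),
          abs_of_nonneg (by linarith : (0:ℝ) ≤ h y - t1)]
        ring
      · have hxA : x ∈ A := (hmemA x).mpr hx
        have hyA : y ∉ A := fun hc => (hmemA y).mp hc hy
        have hx' : h' x = h x - t1 := by simp [hh'def, hx]
        have hy' : h' y = 0 := by simp [hh'def, hy]
        have h1 := ht1le x hx
        rw [if_pos (Or.inl ⟨hxA, hyA⟩), mul_one, hy, hx', hy', sub_zero, sub_zero,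
          abs_of_nonneg (by linarith : (0:ℝ) ≤ h x),
          abs_of_nonneg (by linarith : (0:ℝ) ≤ h x - t1)]
        ring
      · have hxA : x ∈ A := (hmemA x).mpr hx
        have hyA : y ∈ A := (hmemA y).mpr hy
        have hx' : h' x = h x - t1 := by simp [hh'def, hx]
        have hy' : h' y = h y - t1 := by simp [hh'def, hy]
        rw [if_neg (by simp [hxA, hyA]), mul_zero, zero_add, hx', hy']
        congr 1
        ring
    -- Minkowski
    have hmink : (∑ v, h v ^ p * μ v) ^ (1/p) ≤
        (∑ v, (t1 * (if v ∈ A then 1 else 0)) ^ p * μ v) ^ (1/p) +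
        (∑ v, h' v ^ p * μ v) ^ (1/p) := by
      have := aux_minkowski hp μ (fun v => t1 * (if v ∈ A then 1 else 0)) h' hμ
      have e1 : ∀ v : V, |t1 * (if v ∈ A then 1 else 0) + h' v| ^ p * μ v = h v ^ p * μ v := by
        intro v
        rw [← hdec v, abs_of_nonneg (hh v)]
      have e2 : ∀ v : V, |t1 * (if v ∈ A then 1 else 0)| ^ p * μ v =
          (t1 * (if v ∈ A then 1 else 0)) ^ p * μ v := by
        intro v
        rw [abs_of_nonneg (by positivity)]
      have e3 : ∀ v : V, |h' v| ^ p * μ v = h' v ^ p * μ v := by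
        intro v
        rw [abs_of_nonneg (hh' v)]
      rw [Finset.sum_congr rfl fun v _ => e1 v, Finset.sum_congr rfl fun v _ => e2 v,
        Finset.sum_congr rfl fun v _ => e3 v] at this
      exact this
    -- indicator term
    have hind : (∑ v, (t1 * (if v ∈ A then 1 else 0)) ^ p * μ v) ^ (1/p) =
        t1 * (∑ v ∈ A, μ v) ^ (1/p) := by
      have e : ∀ v : V, (t1 * (if v ∈ A then 1 else 0)) ^ p * μ v =
          if v ∈ A then t1 ^ p * μ v else 0 := by
        intro v
        split
        · rw [mul_one]
        · rw [mul_zero, Real.zero_rpow hp0, zero_mul]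
      rw [Finset.sum_congr rfl fun v _ => e v, Finset.sum_ite_mem, Finset.univ_inter,
        ← Finset.mul_sum, Real.mul_rpow (Real.rpow_nonneg ht1pos.le _)
          (Finset.sum_nonneg fun v _ => hμ v),
        ← Real.rpow_mul ht1pos.le, mul_one_div_cancel hp0, Real.rpow_one]
    calc (∑ v, h v ^ p * μ v) ^ (1/p)
        ≤ (∑ v, (t1 * (if v ∈ A then 1 else 0)) ^ p * μ v) ^ (1/p) +
          (∑ v, h' v ^ p * μ v) ^ (1/p) := hmink
      _ = t1 * (∑ v ∈ A, μ v) ^ (1/p) + (∑ v, h' v ^ p * μ v) ^ (1/p) := by rw [hind]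
      _ ≤ t1 * (C * ∑ i, (if (a i ∈ A ∧ b i ∉ A) ∨ (b i ∈ A ∧ a i ∉ A) then w i else 0)) +
          C * ∑ i, |h' (a i) - h' (b i)| * w i :=
          add_le_add (mul_le_mul_of_nonneg_left hisoA ht1pos.le) IH
      _ = C * ∑ i, |h (a i) - h (b i)| * w i := by
          rw [Finset.mul_sum, Finset.mul_sum, Finset.mul_sum, Finset.mul_sum,
            ← Finset.sum_add_distrib]
          refine Finset.sum_congr rfl fun i _ => ?_
          rw [hedge (a i) (b i)]
          split_ifs <;> ring

set_option maxHeartbeats 2000000 in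
/-- **Sobolev inequality from the isoperimetric inequality.**  Let `G` be a finite connected
graph with geodesic metric `d`, `ν` a fully supported probability on the edges and `μ` the
induced probability on the vertices.  If `G` has `ν`-isoperimetric dimension `δ` with constant
`C`, then for every `f : V → ℝ`,
`‖f - 𝔼_μ f‖_{L_{δ'}(μ)} ≤ 2C · ∑_e (|f(e⁺) - f(e⁻)|/d(e)) ν(e)` where `1/δ + 1/δ' = 1`. -/
theorem sobolev_of_isoperimetric {V : Type*} [Fintype V] (G : SimpleGraph V)
    (hconn : G.Connected)
    (d : V → V → ℝ) (hsymm : ∀ u v, d u v = d v u)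
    (hd : IsGeodesicOf G (Sym2.lift ⟨d, hsymm⟩) d)
    (ν : Sym2 V → ℝ) (hνpos : ∀ e ∈ G.edgeSet, 0 < ν e) (hνsupp : ∀ e ∉ G.edgeSet, ν e = 0)
    (hν1 : ∑ e : Sym2 V, (if e ∈ G.edgeSet then ν e else 0) = 1)
    (δ C : ℝ) (hδ : 1 ≤ δ) (hC : 0 < C)
    (hiso : ∀ A : Finset V,
      min (∑ v ∈ A, inducedProb G ν v) (∑ v ∈ Aᶜ, inducedProb G ν v) ^ ((δ - 1) / δ)
        ≤ C * ∑ e : Sym2 V,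
            if e ∈ G.edgeSet ∧ ∃ a b, e = s(a, b) ∧ a ∈ A ∧ b ∉ A then
              ν e / Sym2.lift ⟨d, hsymm⟩ e else 0)
    (δ' : ℝ) (hδ'1 : 1 ≤ δ') (hconj : 1 / δ + 1 / δ' = 1)
    (f : V → ℝ) :
    (∑ v : V, |f v - ∑ u : V, f u * inducedProb G ν u| ^ δ' * inducedProb G ν v) ^ (1 / δ')
      ≤ 2 * C * ∑ e : Sym2 V,
          (if e ∈ G.edgeSet then
            (Sym2.lift ⟨fun a b => |f a - f b| / d a b,
              fun a b => by dsimp only; rw [abs_sub_comm, hsymm]⟩ e) * ν e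
          else 0) := by
  classical
  obtain ⟨x0⟩ := hconn.nonempty
  set μ : V → ℝ := inducedProb G ν with hμdef
  have hμ0 : ∀ v, 0 ≤ μ v := by
    intro v
    apply mul_nonneg (by norm_num)
    refine Finset.sum_nonneg fun e _ => ?_
    split
    · next he => exact (hνpos e he.1).le
    · exact le_refl 0
  have hδpos : (0:ℝ) < δ := lt_of_lt_of_le one_pos hδ
  have hδ'pos : (0:ℝ) < δ' := lt_of_lt_of_le one_pos hδ'1
  have hδ'0 : δ' ≠ 0 := ne_of_gt hδ'pos
  have hδ'ne1 : δ' ≠ 1 := by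
    intro h
    rw [h] at hconj
    have h2 : 1/δ = 0 := by linarith
    rw [div_eq_zero_iff] at h2
    rcases h2 with h2 | h2
    · norm_num at h2
    · rw [h2] at hδpos; exact absurd hδpos (lt_irrefl 0)
  have hδ'gt : 1 < δ' := lt_of_le_of_ne hδ'1 (Ne.symm hδ'ne1)
  have hconj' : Real.HolderConjugate δ' δ :=
    Real.holderConjugate_iff.mpr ⟨hδ'gt, by rw [inv_eq_one_div, inv_eq_one_div]; linarith⟩
  have hexp : (δ - 1)/δ = 1/δ' := by
    have h1 : (δ - 1)/δ = 1 - 1/δ := by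
      rw [sub_div, div_self (ne_of_gt hδpos)]
    linarith
  -- total mass one
  have hμ1 : ∑ v, μ v = 1 := by
    have step : ∀ e : Sym2 V, (∑ v : V, if e ∈ G.edgeSet ∧ v ∈ e then ν e else 0)
        = if e ∈ G.edgeSet then 2 * ν e else 0 := by
      intro e
      by_cases he : e ∈ G.edgeSet
      · induction e using Sym2.ind with
        | _ x y =>
          have hxy : x ≠ y := G.ne_of_adj ((SimpleGraph.mem_edgeSet G).mp he)
          rw [if_pos he]
          calc ∑ v : V, (if s(x,y) ∈ G.edgeSet ∧ v ∈ s(x,y) then ν s(x,y) else 0)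
              = ∑ v : V, ((if v = x then ν s(x,y) else 0) + (if v = y then ν s(x,y) else 0)) := by
                refine Finset.sum_congr rfl fun v _ => ?_
                by_cases hvx : v = x <;> by_cases hvy : v = y
                · exact absurd (hvx.symm.trans hvy) hxy
                · simp [he, hvx, hvy, Sym2.mem_iff, hxy, Ne.symm hxy]
                · simp [he, hvx, hvy, Sym2.mem_iff, hxy, Ne.symm hxy]
                · simp [he, hvx, hvy, Sym2.mem_iff, hxy, Ne.symm hxy]
            _ = 2 * ν s(x,y) := by
                rw [Finset.sum_add_distrib, Fintype.sum_ite_eq' x (fun _ => ν s(x,y)),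
                  Fintype.sum_ite_eq' y (fun _ => ν s(x,y))]
                ring
      · rw [if_neg he]
        refine Finset.sum_eq_zero fun v _ => ?_
        rw [if_neg (by tauto)]
    have : ∑ v, μ v = (1/2) * ∑ v : V, ∑ e : Sym2 V, if e ∈ G.edgeSet ∧ v ∈ e then ν e else 0 := by
      rw [Finset.mul_sum]
      rfl
    rw [this, Finset.sum_comm, Finset.sum_congr rfl fun e _ => step e]
    have h5 : ∑ e : Sym2 V, (if e ∈ G.edgeSet then 2 * ν e else 0)
        = 2 * ∑ e : Sym2 V, (if e ∈ G.edgeSet then ν e else 0) := by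
      rw [Finset.mul_sum]
      refine Finset.sum_congr rfl fun e _ => ?_
      split <;> ring
    rw [h5, hν1]
    norm_num
  -- the simp-normal RHS for hiso when he fails
  have hstep : True := trivial
  -- median
  have himg : (Finset.image f Finset.univ).Nonempty :=
    ⟨f x0, Finset.mem_image_of_mem f (Finset.mem_univ x0)⟩
  set Med : Finset ℝ := (Finset.image f Finset.univ).filter
      (fun t => 1/2 ≤ ∑ v ∈ Finset.univ.filter (fun v => f v ≤ t), μ v) with hMeddef
  have hMedne : Med.Nonempty := by
    refine ⟨(Finset.image f Finset.univ).max' himg, Finset.mem_filter.mpr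
      ⟨(Finset.image f Finset.univ).max'_mem himg, ?_⟩⟩
    have hflt : Finset.univ.filter
        (fun v => f v ≤ (Finset.image f Finset.univ).max' himg) = Finset.univ :=
      Finset.filter_true_of_mem fun v _ =>
        Finset.le_max' _ _ (Finset.mem_image_of_mem f (Finset.mem_univ v))
    rw [hflt, hμ1]
    norm_num
  set m := Med.min' hMedne with hmdef
  have hmmem := Med.min'_mem hMedne
  have hm_half : 1/2 ≤ ∑ v ∈ Finset.univ.filter (fun v => f v ≤ m), μ v :=
    (Finset.mem_filter.mp hmmem).2
  have hS1 : ∑ v ∈ Finset.univ.filter (fun v => m < f v), μ v ≤ 1/2 := by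
    have htot := Finset.sum_filter_add_sum_filter_not Finset.univ (fun v => f v ≤ m) μ
    rw [hμ1] at htot
    have heq : Finset.univ.filter (fun v => ¬ f v ≤ m)
        = Finset.univ.filter (fun v => m < f v) := by
      apply Finset.filter_congr
      intro v _
      simp [not_le]
    rw [heq] at htot
    linarith
  have hS2 : ∑ v ∈ Finset.univ.filter (fun v => f v < m), μ v ≤ 1/2 := by
    by_contra hcon
    push_neg at hcon
    set B := Finset.univ.filter (fun v => f v < m) with hB
    have hBne : B.Nonempty := by
      rcases Finset.eq_empty_or_nonempty B with hbe | hbn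
      · rw [hbe, Finset.sum_empty] at hcon
        norm_num at hcon
      · exact hbn
    have hBine : (B.image f).Nonempty := hBne.image f
    obtain ⟨vb, hvb, hvbt⟩ := Finset.mem_image.mp ((B.image f).max'_mem hBine)
    have ht'lt : f vb < m := (Finset.mem_filter.mp hvb).2
    have hsub : B ⊆ Finset.univ.filter (fun v => f v ≤ f vb) := by
      intro v hv
      refine Finset.mem_filter.mpr ⟨Finset.mem_univ v, ?_⟩
      rw [hvbt]
      exact Finset.le_max' _ _ (Finset.mem_image_of_mem f hv)
    have hhalf : 1/2 ≤ ∑ v ∈ Finset.univ.filter (fun v => f v ≤ f vb), μ v :=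
      le_trans hcon.le (Finset.sum_le_sum_of_subset_of_nonneg hsub fun v _ _ => hμ0 v)
    have ht'Med : f vb ∈ Med := Finset.mem_filter.mpr
      ⟨Finset.mem_image_of_mem f (Finset.mem_univ vb), hhalf⟩
    exact absurd (Med.min'_le _ ht'Med) (not_le.mpr ht'lt)
  -- edge setup
  set w : Sym2 V → ℝ := fun e => if e ∈ G.edgeSet then ν e / Sym2.lift ⟨d, hsymm⟩ e else 0
    with hwdef
  have hout : ∀ e : Sym2 V, e = s((Quot.out e).1, (Quot.out e).2) := fun e =>
    (Quot.out_eq e).symm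
  -- conversion of the boundary sum
  have hbdry : ∀ A : Finset V,
      (∑ e : Sym2 V, if e ∈ G.edgeSet ∧ ∃ a b, e = s(a, b) ∧ a ∈ A ∧ b ∉ A then
        ν e / Sym2.lift ⟨d, hsymm⟩ e else 0)
      = ∑ e : Sym2 V, (if ((Quot.out e).1 ∈ A ∧ (Quot.out e).2 ∉ A) ∨
          ((Quot.out e).2 ∈ A ∧ (Quot.out e).1 ∉ A) then w e else 0) := by
    intro A
    refine Finset.sum_congr rfl fun e _ => ?_
    have hiff : (∃ a b, e = s(a, b) ∧ a ∈ A ∧ b ∉ A) ↔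
        (((Quot.out e).1 ∈ A ∧ (Quot.out e).2 ∉ A) ∨
          ((Quot.out e).2 ∈ A ∧ (Quot.out e).1 ∉ A)) := by
      constructor
      · rintro ⟨a, b, hab, ha, hb⟩
        have h2 : s((Quot.out e).1, (Quot.out e).2) = s(a, b) := (hout e).symm.trans hab
        rw [Sym2.eq_iff] at h2
        rcases h2 with ⟨h3, h4⟩ | ⟨h3, h4⟩
        · exact Or.inl ⟨by rwa [h3], by rwa [h4]⟩
        · exact Or.inr ⟨by rwa [h4], by rwa [h3]⟩
      · rintro (⟨h1, h2⟩ | ⟨h1, h2⟩)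
        · exact ⟨_, _, hout e, h1, h2⟩
        · exact ⟨_, _, (hout e).trans Sym2.eq_swap, h1, h2⟩
    by_cases he : e ∈ G.edgeSet
    · simp only [hwdef, he, true_and, if_true]
      exact if_congr hiff rfl rfl
    · simp [hwdef, he]
  -- isoperimetric inequality in the key form
  have hisoGen : ∀ (S : Finset V), (∑ v ∈ S, μ v) ≤ 1/2 → ∀ A : Finset V, A ⊆ S →
      (∑ v ∈ A, μ v) ^ (1/δ') ≤ C * ∑ e : Sym2 V,
        (if ((Quot.out e).1 ∈ A ∧ (Quot.out e).2 ∉ A) ∨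
          ((Quot.out e).2 ∈ A ∧ (Quot.out e).1 ∉ A) then w e else 0) := by
    intro S hShalf A hAS
    have hA_half : ∑ v ∈ A, μ v ≤ 1/2 :=
      le_trans (Finset.sum_le_sum_of_subset_of_nonneg hAS fun v _ _ => hμ0 v) hShalf
    have hcompl : ∑ v ∈ Aᶜ, μ v = 1 - ∑ v ∈ A, μ v := by
      have h3 := Finset.sum_add_sum_compl A μ
      rw [hμ1] at h3
      linarith
    have hmin : min (∑ v ∈ A, μ v) (∑ v ∈ Aᶜ, μ v) = ∑ v ∈ A, μ v := by
      rw [hcompl]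
      exact min_eq_left (by linarith)
    have h4 := hiso A
    rw [hmin, hexp, hbdry A] at h4
    exact h4
  -- positive and negative parts
  set gp : V → ℝ := fun v => max (f v - m) 0 with hgpdef
  set gm : V → ℝ := fun v => max (m - f v) 0 with hgmdef
  have hgp0 : ∀ v, 0 ≤ gp v := fun v => le_max_right _ _
  have hgm0 : ∀ v, 0 ≤ gm v := fun v => le_max_right _ _
  have hkey_p := aux_key μ hμ0 (fun e => (Quot.out e).1) (fun e => (Quot.out e).2) w δ' C
    hδ'1 hC.le (Finset.univ.filter (fun v => m < f v))
    (fun A hAS => hisoGen _ hS1 A hAS)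
    ((Finset.image gp Finset.univ).erase 0).card gp hgp0
    (fun v hv => Finset.mem_filter.mpr ⟨Finset.mem_univ v, by
      by_contra hc
      push_neg at hc
      rw [hgpdef] at hv
      simp only [max_eq_right (sub_nonpos.mpr hc)] at hv
      exact absurd hv (lt_irrefl 0)⟩) le_rfl
  have hkey_m := aux_key μ hμ0 (fun e => (Quot.out e).1) (fun e => (Quot.out e).2) w δ' C
    hδ'1 hC.le (Finset.univ.filter (fun v => f v < m))
    (fun A hAS => hisoGen _ hS2 A hAS)
    ((Finset.image gm Finset.univ).erase 0).card gm hgm0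
    (fun v hv => Finset.mem_filter.mpr ⟨Finset.mem_univ v, by
      by_contra hc
      push_neg at hc
      rw [hgmdef] at hv
      simp only [max_eq_right (sub_nonpos.mpr hc)] at hv
      exact absurd hv (lt_irrefl 0)⟩) le_rfl
  set Xp := ∑ v, gp v ^ δ' * μ v with hXpdef
  set Xm := ∑ v, gm v ^ δ' * μ v with hXmdef
  set Tp := ∑ e : Sym2 V, |gp ((Quot.out e).1) - gp ((Quot.out e).2)| * w e with hTpdef
  set Tm := ∑ e : Sym2 V, |gm ((Quot.out e).1) - gm ((Quot.out e).2)| * w e with hTmdef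
  set Tf := ∑ e : Sym2 V, |f ((Quot.out e).1) - f ((Quot.out e).2)| * w e with hTfdef
  have hXp0 : 0 ≤ Xp := Finset.sum_nonneg fun v _ =>
    mul_nonneg (Real.rpow_nonneg (hgp0 v) _) (hμ0 v)
  have hXm0 : 0 ≤ Xm := Finset.sum_nonneg fun v _ =>
    mul_nonneg (Real.rpow_nonneg (hgm0 v) _) (hμ0 v)
  have hCTp0 : 0 ≤ C * Tp := le_trans (Real.rpow_nonneg hXp0 _) hkey_p
  have hCTm0 : 0 ≤ C * Tm := le_trans (Real.rpow_nonneg hXm0 _) hkey_m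
  -- sum splitting for the vertex part
  have hXsum : ∑ v, |f v - m| ^ δ' * μ v = Xp + Xm := by
    rw [hXpdef, hXmdef, ← Finset.sum_add_distrib]
    refine Finset.sum_congr rfl fun v _ => ?_
    rcases le_total (f v) m with hv | hv
    · have e1 : gp v = 0 := by rw [hgpdef]; exact max_eq_right (sub_nonpos.mpr hv)
      have e2 : gm v = m - f v := by rw [hgmdef]; exact max_eq_left (by linarith)
      rw [e1, e2, abs_of_nonpos (by linarith : f v - m ≤ 0), Real.zero_rpow hδ'0,
        zero_mul, zero_add, neg_sub]
    · have e1 : gp v = f v - m := by rw [hgpdef]; exact max_eq_left (by linarith)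
      have e2 : gm v = 0 := by rw [hgmdef]; exact max_eq_right (sub_nonpos.mpr hv)
      rw [e1, e2, abs_of_nonneg (by linarith : 0 ≤ f v - m), Real.zero_rpow hδ'0,
        zero_mul, add_zero]
  -- sum splitting for the edge part
  have hTsum : Tp + Tm = Tf := by
    rw [hTpdef, hTmdef, hTfdef, ← Finset.sum_add_distrib]
    refine Finset.sum_congr rfl fun e _ => ?_
    rw [← add_mul]
    congr 1
    have hsplit := pos_part_abs_split (f ((Quot.out e).1) - m) (f ((Quot.out e).2) - m)
    rw [sub_sub_sub_cancel_right] at hsplit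
    rw [hgpdef, hgmdef]
    simp only []
    rw [← hsplit]
    congr 2 <;> ring_nf
  -- identification of Tf with the goal's RHS sum
  have hfinal : Tf = ∑ e : Sym2 V,
      (if e ∈ G.edgeSet then
        (Sym2.lift ⟨fun a b => |f a - f b| / d a b,
          fun a b => by dsimp only; rw [abs_sub_comm, hsymm]⟩ e) * ν e
      else 0) := by
    rw [hTfdef]
    refine Finset.sum_congr rfl fun e _ => ?_
    by_cases he : e ∈ G.edgeSet
    · rw [if_pos he]
      simp only [hwdef, he, if_true]
      set x := (Quot.out e).1 with hx
      set y := (Quot.out e).2 with hy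
      have hxy : e = s(x, y) := hout e
      rw [hxy, Sym2.lift_mk, Sym2.lift_mk]
      dsimp only
      ring
    · rw [if_neg he]
      simp only [hwdef, he, if_false, mul_zero]
  -- the mean
  set Ef : ℝ := ∑ u : V, f u * μ u with hEfdef
  set Y := ∑ v, |f v - m| ^ δ' * μ v with hYdef
  have hY0 : 0 ≤ Y := Finset.sum_nonneg fun v _ =>
    mul_nonneg (Real.rpow_nonneg (abs_nonneg _) _) (hμ0 v)
  -- step: |m - Ef| bounded by the Lp norm of f - m
  have hmean : |m - Ef| ≤ Y ^ (1/δ') := by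
    have h1 : m - Ef = ∑ u, (m - f u) * μ u := by
      have h2 : ∀ u : V, (m - f u) * μ u = m * μ u - f u * μ u := fun u => by ring
      rw [Finset.sum_congr rfl fun u _ => h2 u, Finset.sum_sub_distrib,
        ← Finset.mul_sum, hμ1, mul_one, hEfdef]
    calc |m - Ef| ≤ ∑ u, |(m - f u) * μ u| := by
          rw [h1]; exact Finset.abs_sum_le_sum_abs _ _
      _ = ∑ u, |f u - m| * μ u := by
          refine Finset.sum_congr rfl fun u _ => ?_
          rw [abs_mul, abs_of_nonneg (hμ0 u), abs_sub_comm]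
      _ ≤ Y ^ (1/δ') := by
          rw [hYdef]
          exact aux_L1_le_Lp hconj' μ (fun u => f u - m) hμ0 hμ1
  -- Minkowski for the mean shift
  have hmink : (∑ v : V, |f v - Ef| ^ δ' * μ v) ^ (1/δ') ≤ Y ^ (1/δ') + |m - Ef| := by
    have h := aux_minkowski hδ'1 μ (fun v => f v - m) (fun _ => m - Ef) hμ0
    have e1 : ∀ v : V, |(f v - m) + (m - Ef)| ^ δ' * μ v = |f v - Ef| ^ δ' * μ v := by
      intro v
      congr 2
      ring
    have e2 : (∑ v : V, |m - Ef| ^ δ' * μ v) ^ (1/δ') = |m - Ef| := by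
      rw [← Finset.mul_sum, hμ1, mul_one, ← Real.rpow_mul (abs_nonneg _),
        mul_one_div_cancel hδ'0, Real.rpow_one]
    rw [Finset.sum_congr rfl fun v _ => e1 v] at h
    calc (∑ v : V, |f v - Ef| ^ δ' * μ v) ^ (1/δ')
        ≤ (∑ v : V, |f v - m| ^ δ' * μ v) ^ (1/δ')
          + (∑ v : V, |m - Ef| ^ δ' * μ v) ^ (1/δ') := h
      _ = Y ^ (1/δ') + |m - Ef| := by rw [e2, hYdef]
  -- combine the two halves via the key lemma
  have hYle : Y ^ (1/δ') ≤ C * Tf := by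
    have hXple : Xp ≤ (C * Tp) ^ δ' := by
      have h1 : (Xp ^ (1/δ')) ^ δ' ≤ (C * Tp) ^ δ' :=
        Real.rpow_le_rpow (Real.rpow_nonneg hXp0 _) hkey_p hδ'pos.le
      rwa [← Real.rpow_mul hXp0, one_div_mul_cancel hδ'0, Real.rpow_one] at h1
    have hXmle : Xm ≤ (C * Tm) ^ δ' := by
      have h1 : (Xm ^ (1/δ')) ^ δ' ≤ (C * Tm) ^ δ' :=
        Real.rpow_le_rpow (Real.rpow_nonneg hXm0 _) hkey_m hδ'pos.le
      rwa [← Real.rpow_mul hXm0, one_div_mul_cancel hδ'0, Real.rpow_one] at h1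
    have h2 : Y ≤ (C * Tp + C * Tm) ^ δ' := by
      calc Y = Xp + Xm := hXsum
        _ ≤ (C * Tp) ^ δ' + (C * Tm) ^ δ' := add_le_add hXple hXmle
        _ ≤ (C * Tp + C * Tm) ^ δ' := aux_add_rpow_le hCTp0 hCTm0 hδ'1
    have h3 : Y ^ (1/δ') ≤ ((C * Tp + C * Tm) ^ δ') ^ (1/δ') :=
      Real.rpow_le_rpow hY0 h2 (by positivity)
    rwa [← Real.rpow_mul (by linarith : (0:ℝ) ≤ C * Tp + C * Tm),
      mul_one_div_cancel hδ'0, Real.rpow_one,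
      show C * Tp + C * Tm = C * (Tp + Tm) by ring, hTsum] at h3
  calc (∑ v : V, |f v - Ef| ^ δ' * μ v) ^ (1/δ')
      ≤ Y ^ (1/δ') + |m - Ef| := hmink
    _ ≤ Y ^ (1/δ') + Y ^ (1/δ') := by linarith [hmean]
    _ ≤ C * Tf + C * Tf := by linarith [hYle]
    _ = 2 * C * Tf := by ring
    _ = 2 * C * ∑ e : Sym2 V,
          (if e ∈ G.edgeSet then
            (Sym2.lift ⟨fun a b => |f a - f b| / d a b,
              fun a b => by dsimp only; rw [abs_sub_comm, hsymm]⟩ e) * ν e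
          else 0) := by rw [hfinal]
end
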